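/- arXiv:2212.11176 — 2 statements merged into one kernel-verified Lean document; each statement's English description precedes it below -/
import Mathlib

section
/- Let B ⊆ ℕ be nonempty with upper Buck density zero. Then for every α ∈ [0,1] there exists A ⊆ ℕ such that for every arithmetic quasi-density μ (induced by an arithmetic upper quasi-density), both A and A + B lie in dom(μ) and μ(A + B) = α. -/
open Filter Set

/-- Upper asymptotic density. -/
noncomputable def upperDensity (X : Set ℕ) : ℝ :=
  Filter.limsup (fun n : ℕ => ((X ∩ Set.Icc 1 n).ncard : ℝ) / n) Filter.atTop

/-- `A` is a finite union of arithmetic progressions `k·ℕ + h` with `k ≥ 1`. -/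
def IsAPUnion (A : Set ℕ) : Prop :=
  ∃ S : Finset (ℕ × ℕ), (∀ p ∈ S, 1 ≤ p.1) ∧
    A = ⋃ p ∈ S, {n : ℕ | ∃ m : ℕ, n = p.1 * m + p.2}

/-- Upper Buck density. -/
noncomputable def buckUpper (X : Set ℕ) : ℝ :=
  sInf {d : ℝ | ∃ A : Set ℕ, IsAPUnion A ∧ X ⊆ A ∧ d = upperDensity A}

/-- Lower Buck density. -/
noncomputable def buckLower (X : Set ℕ) : ℝ := 1 - buckUpper Xᶜ

/-- Sumset of two subsets of ℕ. -/
def sumset (X Y : Set ℕ) : Set ℕ := {n : ℕ | ∃ x ∈ X, ∃ y ∈ Y, n = x + y}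

/-- An arithmetic upper quasi-density on ℕ. -/
structure ArithUpperQuasiDensity where
  toFun : Set ℕ → ℝ
  le_one : ∀ X : Set ℕ, toFun X ≤ 1
  univ_eq : toFun Set.univ = 1
  subadd : ∀ X Y : Set ℕ, toFun (X ∪ Y) ≤ toFun X + toFun Y
  scale : ∀ (X : Set ℕ) (k h : ℕ), 1 ≤ k →
    toFun ((fun x => k * x + h) '' X) = toFun X / k

/-- Conjugate (lower) quasi-density. -/
noncomputable def ArithUpperQuasiDensity.conj (μ : ArithUpperQuasiDensity)
    (X : Set ℕ) : ℝ := 1 - μ.toFun Xᶜ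


open scoped Classical

namespace Stmt16

/-! ### Basic lemmas about arithmetic upper quasi-densities -/

/-- The set of naturals congruent to `r` mod `K`. -/
def cls (K r : ℕ) : Set ℕ := {n : ℕ | n % K = r}

lemma mu_empty (μ : ArithUpperQuasiDensity) : μ.toFun ∅ = 0 := by
  have h := μ.scale ∅ 2 0 (by norm_num)
  simp only [Set.image_empty] at h
  linarith

lemma mu_compl_bound (μ : ArithUpperQuasiDensity) (X : Set ℕ) :
    1 - μ.toFun Xᶜ ≤ μ.toFun X := by
  have h := μ.subadd X Xᶜ
  rw [Set.union_compl_self, μ.univ_eq] at h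
  linarith

lemma mu_nonneg (μ : ArithUpperQuasiDensity) (X : Set ℕ) : 0 ≤ μ.toFun X := by
  have h := mu_compl_bound μ X
  have := μ.le_one Xᶜ
  linarith

lemma mu_biUnion (μ : ArithUpperQuasiDensity) {ι : Type*} (s : Finset ι) (f : ι → Set ℕ) :
    μ.toFun (⋃ i ∈ s, f i) ≤ ∑ i ∈ s, μ.toFun (f i) := by
  induction s using Finset.induction with
  | empty => simp [mu_empty]
  | @insert a s ha ih =>
    rw [Finset.set_biUnion_insert, Finset.sum_insert ha]
    calc μ.toFun (f a ∪ ⋃ i ∈ s, f i) ≤ μ.toFun (f a) + μ.toFun (⋃ i ∈ s, f i) :=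
          μ.subadd _ _
      _ ≤ μ.toFun (f a) + ∑ i ∈ s, μ.toFun (f i) := by linarith

lemma mu_class_inter (μ : ArithUpperQuasiDensity) (X : Set ℕ) (K r : ℕ)
    (hK : 0 < K) (hr : r < K) :
    μ.toFun (X ∩ cls K r) ≤ 1 / K := by
  have himg : X ∩ cls K r = (fun x => K * x + r) '' {m : ℕ | K * m + r ∈ X} := by
    ext n
    constructor
    · rintro ⟨hX, hc⟩
      refine ⟨n / K, ?_, ?_⟩
      · show K * (n / K) + r ∈ X
        have : K * (n / K) + n % K = n := Nat.div_add_mod n K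
        rw [show (n % K) = r from hc] at this
        rwa [this]
      · show K * (n / K) + r = n
        have : K * (n / K) + n % K = n := Nat.div_add_mod n K
        rw [show (n % K) = r from hc] at this
        exact this
    · rintro ⟨m, hm, rfl⟩
      refine ⟨hm, ?_⟩
      show (K * m + r) % K = r
      rw [Nat.mul_add_mod, Nat.mod_eq_of_lt hr]
  rw [himg, μ.scale _ K r hK]
  have h1 := μ.le_one {m : ℕ | K * m + r ∈ X}
  have hKpos : (0 : ℝ) < K := by exact_mod_cast hK
  gcongr

lemma mu_upper (μ : ArithUpperQuasiDensity) (X : Set ℕ) (K : ℕ) (hK : 0 < K)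
    (R : Finset ℕ) (hcov : ∀ n ∈ X, n % K ∈ R) :
    μ.toFun X ≤ (R.card : ℝ) / K := by
  set R' := R.filter (· < K) with hR'
  have hXeq : X = ⋃ r ∈ R', X ∩ cls K r := by
    ext n
    simp only [Set.mem_iUnion, exists_prop]
    constructor
    · intro hn
      exact ⟨n % K, by
        simp only [hR', Finset.mem_filter]
        exact ⟨hcov n hn, Nat.mod_lt _ hK⟩, hn, rfl⟩
    · rintro ⟨r, _, hn, _⟩
      exact hn
  have hKpos : (0 : ℝ) < K := by exact_mod_cast hK
  calc μ.toFun X = μ.toFun (⋃ r ∈ R', X ∩ cls K r) := by rw [← hXeq]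
    _ ≤ ∑ r ∈ R', μ.toFun (X ∩ cls K r) := mu_biUnion μ R' _
    _ ≤ ∑ _r ∈ R', 1 / (K : ℝ) := by
        apply Finset.sum_le_sum
        intro r hr
        exact mu_class_inter μ X K r hK (by simpa [hR'] using (Finset.mem_filter.mp hr).2)
    _ = (R'.card : ℝ) / K := by rw [Finset.sum_const, nsmul_eq_mul]; ring
    _ ≤ (R.card : ℝ) / K := by
        gcongr
        exact Finset.filter_subset _ _

lemma mu_low (μ : ArithUpperQuasiDensity) (X : Set ℕ) (N : ℕ)
    (hX : ∀ n ∈ X, n < N) (K : ℕ) (hK : 0 < K) :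
    μ.toFun X ≤ (N : ℝ) / K := by
  have h := mu_upper μ X K hK ((Finset.range N).image (· % K))
    (fun n hn => Finset.mem_image_of_mem _ (Finset.mem_range.mpr (hX n hn)))
  apply h.trans
  have hKpos : (0 : ℝ) < K := by exact_mod_cast hK
  gcongr
  exact_mod_cast Finset.card_image_le.trans (Finset.card_range N).le

theorem pin (X : Set ℕ) (a : ℝ)
    (h : ∀ ε : ℝ, 0 < ε → ∃ K : ℕ, 0 < K ∧ ∃ Sc Tc : Finset ℕ, ∃ N₀ : ℕ,
      (∀ n ∈ X, n % K ∈ Sc) ∧ (∀ n : ℕ, n ∉ X → N₀ ≤ n → n % K ∈ Tc) ∧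
      ((Sc.card : ℝ) ≤ (a + ε) * K) ∧ ((Tc.card : ℝ) ≤ (1 - a + ε) * K))
    (μ : ArithUpperQuasiDensity) :
    μ.toFun X = a ∧ μ.toFun Xᶜ = 1 - a := by
  have hup : μ.toFun X ≤ a := by
    apply le_of_forall_pos_le_add
    intro ε hε
    obtain ⟨K, hK, Sc, Tc, N₀, hS, hT, hSc, hTc⟩ := h ε hε
    have hKpos : (0 : ℝ) < K := by exact_mod_cast hK
    calc μ.toFun X ≤ (Sc.card : ℝ) / K := mu_upper μ X K hK Sc hS
      _ ≤ a + ε := by rw [div_le_iff₀ hKpos]; linarith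
  have hupc : μ.toFun Xᶜ ≤ 1 - a := by
    apply le_of_forall_pos_le_add
    intro ε hε
    obtain ⟨K, hK, Sc, Tc, N₀, hS, hT, hSc, hTc⟩ := h (ε / 2) (by linarith)
    have hKpos : (0 : ℝ) < K := by exact_mod_cast hK
    obtain ⟨M, hM⟩ := exists_nat_gt (max 1 ((N₀ : ℝ) / (ε / 2)))
    have hM1 : (1 : ℝ) < M := lt_of_le_of_lt (le_max_left _ _) hM
    have hM0 : 0 < M := by
      have : (0 : ℝ) < M := by linarith
      exact_mod_cast this
    have hsplit : Xᶜ = (Xᶜ ∩ {n : ℕ | n < N₀}) ∪ (Xᶜ ∩ {n : ℕ | N₀ ≤ n}) := by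
      ext n
      simp only [Set.mem_union, Set.mem_inter_iff, Set.mem_setOf_eq]
      rcases lt_or_ge n N₀ with h' | h' <;> tauto
    have h1 : μ.toFun (Xᶜ ∩ {n : ℕ | n < N₀}) ≤ (N₀ : ℝ) / M :=
      mu_low μ _ N₀ (fun n hn => hn.2) M hM0
    have h2 : μ.toFun (Xᶜ ∩ {n : ℕ | N₀ ≤ n}) ≤ (Tc.card : ℝ) / K :=
      mu_upper μ _ K hK Tc (fun n hn => hT n hn.1 hn.2)
    have hsub := μ.subadd (Xᶜ ∩ {n : ℕ | n < N₀}) (Xᶜ ∩ {n : ℕ | N₀ ≤ n})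
    rw [← hsplit] at hsub
    have hNM : (N₀ : ℝ) / M < ε / 2 := by
      rw [div_lt_iff₀ (by positivity)]
      have h' : (N₀ : ℝ) / (ε / 2) < M := lt_of_le_of_lt (le_max_right _ _) hM
      rw [div_lt_iff₀ (by linarith)] at h'
      linarith
    have hTK : (Tc.card : ℝ) / K ≤ 1 - a + ε / 2 := by rw [div_le_iff₀ hKpos]; linarith
    linarith
  have hlo : a ≤ μ.toFun X := by
    have := mu_compl_bound μ X
    linarith
  have hloc : 1 - a ≤ μ.toFun Xᶜ := by
    have h' := mu_compl_bound μ Xᶜ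
    rw [compl_compl] at h'
    have : μ.toFun X ≤ a := hup
    linarith
  exact ⟨le_antisymm hup hlo, le_antisymm hupc hloc⟩

/-! ### Residue machinery -/

/-- Residues of a set `X` modulo `K`. -/
noncomputable def RES (X : Set ℕ) (K : ℕ) : Finset ℕ :=
  (Finset.range K).filter fun r => ∃ b ∈ X, b % K = r

lemma mem_RES {X : Set ℕ} {K r : ℕ} : r ∈ RES X K ↔ r < K ∧ ∃ b ∈ X, b % K = r := by
  simp [RES]

lemma mod_mem_RES {X : Set ℕ} {K : ℕ} (hK : 0 < K) {b : ℕ} (hb : b ∈ X) :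
    b % K ∈ RES X K :=
  mem_RES.mpr ⟨Nat.mod_lt _ hK, b, hb, rfl⟩

lemma RES_mono {X Y : Set ℕ} (h : X ⊆ Y) (K : ℕ) : RES X K ⊆ RES Y K := by
  intro r hr
  rw [mem_RES] at *
  exact ⟨hr.1, hr.2.imp fun b hb => ⟨h hb.1, hb.2⟩⟩

lemma RES_proj {X : Set ℕ} {K K' : ℕ} (hd : K ∣ K') (hK : 0 < K) {r : ℕ}
    (hr : r ∈ RES X K') : r % K ∈ RES X K := by
  rw [mem_RES] at hr ⊢
  obtain ⟨h1, b, hb, rfl⟩ := hr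
  exact ⟨Nat.mod_lt _ hK, b, hb, (Nat.mod_mod_of_dvd b hd).symm⟩

lemma RES_nonempty {X : Set ℕ} (hX : X.Nonempty) {K : ℕ} (hK : 0 < K) :
    (RES X K).Nonempty := by
  obtain ⟨b, hb⟩ := hX
  exact ⟨b % K, mod_mem_RES hK hb⟩

lemma RES_card_mul (X : Set ℕ) {K K' : ℕ} (hd : K ∣ K') (hK : 0 < K) :
    (RES X K').card ≤ (K' / K) * (RES X K).card := by
  have h1 : (RES X K').card ≤ (K' / K) * ((RES X K').image (· % K)).card := by
    apply Finset.card_le_mul_card_image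
    intro a _
    have hsub : (RES X K').filter (fun x => x % K = a) ⊆
        (Finset.range (K' / K)).image fun j => j * K + a := by
      intro r hr
      obtain ⟨hr1, hr2⟩ := Finset.mem_filter.mp hr
      have hrK : r < K' := (mem_RES.mp hr1).1
      refine Finset.mem_image.mpr ⟨r / K, Finset.mem_range.mpr ?_, ?_⟩
      · exact Nat.div_lt_div_of_lt_of_dvd hd hrK
      · rw [← hr2, Nat.mul_comm, Nat.div_add_mod]
    calc ((RES X K').filter (fun x => x % K = a)).card
        ≤ ((Finset.range (K' / K)).image fun j => j * K + a).card :=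
          Finset.card_le_card hsub
      _ ≤ K' / K := Finset.card_image_le.trans (by simp)
  have h2 : (RES X K').image (· % K) ⊆ RES X K := by
    intro a ha
    obtain ⟨r, hr, rfl⟩ := Finset.mem_image.mp ha
    exact RES_proj hd hK hr
  calc (RES X K').card ≤ (K' / K) * ((RES X K').image (· % K)).card := h1
    _ ≤ (K' / K) * (RES X K).card := by
        exact Nat.mul_le_mul_left _ (Finset.card_le_card h2)

/-- The spray of a class `t` mod `K`: all classes hit by `t + B`. -/
noncomputable def spr (B : Set ℕ) (K t : ℕ) : Finset ℕ := (RES B K).image fun b => (t + b) % K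

lemma spr_card_le (B : Set ℕ) (K t : ℕ) : (spr B K t).card ≤ (RES B K).card :=
  Finset.card_image_le

lemma spr_subset_range (B : Set ℕ) (K t : ℕ) (hK : 0 < K) :
    spr B K t ⊆ Finset.range K := by
  intro x hx
  obtain ⟨b, _, rfl⟩ := Finset.mem_image.mp hx
  exact Finset.mem_range.mpr (Nat.mod_lt _ hK)

lemma spr_proj {B : Set ℕ} {K K' : ℕ} (hd : K ∣ K') (hK : 0 < K) {t x : ℕ}
    (hx : x ∈ spr B K' t) : x % K ∈ spr B K (t % K) := by
  obtain ⟨b', hb', rfl⟩ := Finset.mem_image.mp hx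
  refine Finset.mem_image.mpr ⟨b' % K, RES_proj hd hK hb', ?_⟩
  rw [Nat.mod_mod_of_dvd _ hd]
  exact (Nat.add_mod t b' K).symm

/-- Union of sprays over a finset of classes. -/
noncomputable def WOF (B : Set ℕ) (K : ℕ) (S : Finset ℕ) : Finset ℕ := S.biUnion (spr B K)

lemma WOF_subset_range (B : Set ℕ) (K : ℕ) (S : Finset ℕ) (hK : 0 < K) :
    WOF B K S ⊆ Finset.range K := by
  intro x hx
  obtain ⟨t, _, hx⟩ := Finset.mem_biUnion.mp hx
  exact spr_subset_range B K t hK hx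

lemma WOF_mono (B : Set ℕ) (K : ℕ) {S S' : Finset ℕ} (h : S ⊆ S') :
    WOF B K S ⊆ WOF B K S' := Finset.biUnion_subset_biUnion_of_subset_left _ h

lemma WOF_insert (B : Set ℕ) (K t : ℕ) (S : Finset ℕ) :
    WOF B K (insert t S) = spr B K t ∪ WOF B K S := Finset.biUnion_insert

lemma WOF_erase_union (B : Set ℕ) (K t : ℕ) (T : Finset ℕ) (ht : t ∈ T) :
    WOF B K T = spr B K t ∪ WOF B K (T.erase t) := by
  conv_lhs => rw [← Finset.insert_erase ht]
  exact WOF_insert B K t (T.erase t)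

lemma WOF_union (B : Set ℕ) (K : ℕ) (S S' : Finset ℕ) :
    WOF B K (S ∪ S') = WOF B K S ∪ WOF B K S' := by
  ext x
  simp only [WOF, Finset.mem_biUnion, Finset.mem_union]
  constructor
  · rintro ⟨t, ht | ht, hx⟩
    · exact Or.inl ⟨t, ht, hx⟩
    · exact Or.inr ⟨t, ht, hx⟩
  · rintro (⟨t, h, hx⟩ | ⟨t, h, hx⟩)
    · exact ⟨t, Or.inl h, hx⟩
    · exact ⟨t, Or.inr h, hx⟩

/-- Lift of a finset of classes mod `K` to classes mod `K'`. -/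
noncomputable def liftF (K K' : ℕ) (S : Finset ℕ) : Finset ℕ :=
  (Finset.range K').filter fun r => r % K ∈ S

lemma mem_liftF {K K' r : ℕ} {S : Finset ℕ} :
    r ∈ liftF K K' S ↔ r < K' ∧ r % K ∈ S := by simp [liftF]

lemma liftF_card {K K' : ℕ} (hd : K ∣ K') (hK : 0 < K) {S : Finset ℕ}
    (hS : S ⊆ Finset.range K) :
    (liftF K K' S).card = (K' / K) * S.card := by
  have heq : liftF K K' S = S.biUnion fun s => (Finset.range (K' / K)).image fun j => j * K + s := by
    ext r
    rw [mem_liftF, Finset.mem_biUnion]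
    constructor
    · rintro ⟨h1, h2⟩
      refine ⟨r % K, h2, Finset.mem_image.mpr ⟨r / K, Finset.mem_range.mpr ?_, ?_⟩⟩
      · exact Nat.div_lt_div_of_lt_of_dvd hd h1
      · rw [Nat.mul_comm, Nat.div_add_mod]
    · rintro ⟨s, hs, hr⟩
      obtain ⟨j, hj, rfl⟩ := Finset.mem_image.mp hr
      have hsK : s < K := Finset.mem_range.mp (hS hs)
      have hjK : j < K' / K := Finset.mem_range.mp hj
      constructor
      · calc j * K + s < j * K + K := by omega
          _ = (j + 1) * K := by ring
          _ ≤ (K' / K) * K := Nat.mul_le_mul_right _ (by omega)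
          _ = K' := Nat.div_mul_cancel hd
      · rw [Nat.mul_add_mod', Nat.mod_eq_of_lt hsK]
        exact hs
  have hcards : ∀ s ∈ S, ((Finset.range (K' / K)).image fun j => j * K + s).card = K' / K := by
    intro s _
    rw [Finset.card_image_of_injective _ fun a b hab => by
      have : a * K = b * K := by omega
      exact Nat.eq_of_mul_eq_mul_right hK this, Finset.card_range]
  rw [heq, Finset.card_biUnion]
  · rw [Finset.sum_congr rfl hcards, Finset.sum_const, smul_eq_mul, Nat.mul_comm]
  · intro s₁ h₁ s₂ h₂ hne
    apply Finset.disjoint_left.mpr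
    intro x hx₁ hx₂
    obtain ⟨j₁, _, rfl⟩ := Finset.mem_image.mp hx₁
    obtain ⟨j₂, _, heq2⟩ := Finset.mem_image.mp hx₂
    have h1K : s₁ < K := Finset.mem_range.mp (hS h₁)
    have h2K : s₂ < K := Finset.mem_range.mp (hS h₂)
    apply hne
    have e1 : (j₁ * K + s₁) % K = s₁ := by rw [Nat.mul_add_mod', Nat.mod_eq_of_lt h1K]
    have e2 : (j₂ * K + s₂) % K = s₂ := by rw [Nat.mul_add_mod', Nat.mod_eq_of_lt h2K]
    rw [← e1, ← e2, heq2]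

lemma liftF_sdiff (K K' : ℕ) (S T : Finset ℕ) :
    liftF K K' (S \ T) = liftF K K' S \ liftF K K' T := by
  ext r
  simp only [mem_liftF, Finset.mem_sdiff]
  tauto

lemma liftF_mono (K K' : ℕ) {S T : Finset ℕ} (h : S ⊆ T) :
    liftF K K' S ⊆ liftF K K' T := by
  intro r hr
  rw [mem_liftF] at *
  exact ⟨hr.1, h hr.2⟩

/-- Key exactness: the spray of a lift is the lift of the spray. -/
lemma WOF_liftF (B : Set ℕ) {K K' : ℕ} (hd : K ∣ K') (hK : 0 < K) (hK' : 0 < K')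
    {S : Finset ℕ} (hS : S ⊆ Finset.range K) :
    WOF B K' (liftF K K' S) = liftF K K' (WOF B K S) := by
  ext c
  constructor
  · intro hc
    obtain ⟨t', ht', hc⟩ := Finset.mem_biUnion.mp hc
    rw [mem_liftF] at ht'
    rw [mem_liftF]
    refine ⟨Finset.mem_range.mp (spr_subset_range B K' t' hK' hc), ?_⟩
    exact Finset.mem_biUnion.mpr ⟨t' % K, ht'.2, spr_proj hd hK hc⟩
  · intro hc
    rw [mem_liftF] at hc
    obtain ⟨hcK', hcW⟩ := hc
    obtain ⟨t, ht, hcs⟩ := Finset.mem_biUnion.mp hcW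
    obtain ⟨r, hr, hrc⟩ := Finset.mem_image.mp hcs
    obtain ⟨hrK, b, hb, hbr⟩ := mem_RES.mp hr
    set b' := b % K' with hb'
    have hb'K : b' < K' := Nat.mod_lt _ hK'
    set t'' := (c + (K' - b')) % K' with ht''
    have hkey : (t'' + b') % K' = c := by
      rw [ht'', Nat.mod_add_mod]
      have : c + (K' - b') + b' = c + K' := by omega
      rw [this, Nat.add_mod_right, Nat.mod_eq_of_lt hcK']
    have ht''K : t'' % K = t := by
      have h1 : (t'' + b') % K = c % K := by
        have hmod : (t'' + b') ≡ c [MOD K'] := by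
          unfold Nat.ModEq
          rw [hkey, Nat.mod_eq_of_lt hcK']
        exact Nat.ModEq.of_dvd hd hmod
      have hb'b : b' % K = b % K := Nat.mod_mod_of_dvd b hd
      have h2 : (t'' % K + b % K) % K = (t + b % K) % K := by
        have l1 : (t'' % K + b % K) % K = (t'' + b') % K := by
          rw [Nat.mod_add_mod, ← hb'b]
          exact Nat.add_mod_mod _ _ _
        have l2 : c % K = (t + b % K) % K := by
          rw [← hrc, ← hbr]
        rw [l1, h1, l2]
      have h3 : t'' % K ≡ t [MOD K] := Nat.ModEq.add_right_cancel' (b % K) h2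
      have htK : t < K := Finset.mem_range.mp (hS ht)
      have h4 : t'' % K % K = t % K := h3
      rwa [Nat.mod_mod_of_dvd _ (dvd_refl K), Nat.mod_eq_of_lt htK] at h4
    apply Finset.mem_biUnion.mpr
    refine ⟨t'', mem_liftF.mpr ⟨Nat.mod_lt _ hK', ht''K ▸ ht⟩, ?_⟩
    refine Finset.mem_image.mpr ⟨b', mod_mem_RES hK' hb, hkey⟩


/-! ### Extracting small moduli from Buck density zero -/

lemma count_le_one (X : Set ℕ) (n : ℕ) : ((X ∩ Set.Icc 1 n).ncard : ℝ) / n ≤ 1 := by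
  rcases Nat.eq_zero_or_pos n with rfl | hn
  · simp
  · have hIcc : (Set.Icc 1 n).ncard = n := by
      rw [← Finset.coe_Icc, Set.ncard_coe_finset, Nat.card_Icc]
      omega
    have h1 : (X ∩ Set.Icc 1 n).ncard ≤ (Set.Icc 1 n).ncard :=
      Set.ncard_le_ncard Set.inter_subset_right (Set.finite_Icc _ _)
    rw [hIcc] at h1
    rw [div_le_one (by exact_mod_cast hn)]
    exact_mod_cast h1

lemma count_nonneg (X : Set ℕ) (n : ℕ) : 0 ≤ ((X ∩ Set.Icc 1 n).ncard : ℝ) / n := by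
  positivity

lemma upperDensity_nonneg (X : Set ℕ) : 0 ≤ upperDensity X := by
  apply Filter.le_limsup_of_frequently_le
  · exact Filter.Frequently.of_forall fun n => count_nonneg X n
  · exact Filter.isBoundedUnder_of ⟨1, fun n => count_le_one X n⟩

lemma ud_ge (X : Set ℕ) (K : ℕ) (hK : 0 < K) (R : Finset ℕ) (hR : R ⊆ Finset.range K)
    (W₀ : ℕ) (htail : ∀ r ∈ R, ∀ n : ℕ, W₀ ≤ n → n % K = r → n ∈ X) :
    (R.card : ℝ) / K ≤ upperDensity X := by
  set j₀ := W₀ + 1 with hj₀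
  set f := fun n : ℕ => ((X ∩ Set.Icc 1 n).ncard : ℝ) / n with hf
  set g := fun n : ℕ => (R.card : ℝ) / K - (R.card * (j₀ + 1)) / n with hg
  have hcount : ∀ n : ℕ, j₀ ≤ n / K →
      (R.card : ℝ) * ((n / K : ℕ) - (j₀ : ℝ)) ≤ ((X ∩ Set.Icc 1 n).ncard : ℝ) := by
    intro n hq
    set q := n / K with hqdef
    set F := (R ×ˢ Finset.Ico j₀ q).image (fun p : ℕ × ℕ => p.2 * K + p.1) with hF
    have hFsub : ∀ x ∈ F, x ∈ X ∩ Set.Icc 1 n := by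
      intro x hx
      obtain ⟨⟨r, j⟩, hp, rfl⟩ := Finset.mem_image.mp hx
      obtain ⟨hr, hj⟩ := Finset.mem_product.mp hp
      rw [Finset.mem_Ico] at hj
      have hrK : r < K := Finset.mem_range.mp (hR hr)
      have hj1 : 1 ≤ j := le_trans (by omega) hj.1
      have hx1 : 1 ≤ j * K + r := by
        calc 1 ≤ j := hj1
          _ ≤ j * K := Nat.le_mul_of_pos_right _ hK
          _ ≤ j * K + r := Nat.le_add_right _ _
      have hxn : j * K + r ≤ n := by
        have h2 : (j + 1) * K ≤ q * K := Nat.mul_le_mul_right _ hj.2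
        have h3 : q * K ≤ n := Nat.div_mul_le_self n K
        have hexp : (j + 1) * K = j * K + K := by ring
        omega
      have hmod : (j * K + r) % K = r := by
        rw [Nat.mul_add_mod', Nat.mod_eq_of_lt hrK]
      have hW : W₀ ≤ j * K + r := by
        have hjj : j₀ ≤ j := hj.1
        have hjK : j ≤ j * K := Nat.le_mul_of_pos_right _ hK
        omega
      exact ⟨htail r hr _ hW hmod, hx1, hxn⟩
    have hinj : Set.InjOn (fun p : ℕ × ℕ => p.2 * K + p.1) ↑(R ×ˢ Finset.Ico j₀ q) := by
      intro p hp p' hp' hpp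
      obtain ⟨hr, _⟩ := Finset.mem_product.mp (Finset.mem_coe.mp hp)
      obtain ⟨hr', _⟩ := Finset.mem_product.mp (Finset.mem_coe.mp hp')
      have h1 : p.1 < K := Finset.mem_range.mp (hR hr)
      have h2 : p'.1 < K := Finset.mem_range.mp (hR hr')
      simp only at hpp
      have e1 : (p.2 * K + p.1) % K = p.1 := by rw [Nat.mul_add_mod', Nat.mod_eq_of_lt h1]
      have e2 : (p'.2 * K + p'.1) % K = p'.1 := by rw [Nat.mul_add_mod', Nat.mod_eq_of_lt h2]
      have hfst : p.1 = p'.1 := by rw [← e1, ← e2, hpp]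
      have hsnd : p.2 = p'.2 := by
        have : p.2 * K = p'.2 * K := by omega
        exact Nat.eq_of_mul_eq_mul_right hK this
      exact Prod.ext hfst hsnd
    have hcard : F.card = R.card * (q - j₀) := by
      rw [hF, Finset.card_image_of_injOn hinj, Finset.card_product, Nat.card_Ico]
    have hfin : (X ∩ Set.Icc 1 n).Finite :=
      Set.Finite.subset (Set.finite_Icc _ _) Set.inter_subset_right
    have hle : F.card ≤ (X ∩ Set.Icc 1 n).ncard := by
      have hsub : (F : Set ℕ) ⊆ X ∩ Set.Icc 1 n := fun x hx => hFsub x hx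
      calc F.card = (F : Set ℕ).ncard := (Set.ncard_coe_finset F).symm
        _ ≤ (X ∩ Set.Icc 1 n).ncard := Set.ncard_le_ncard hsub hfin
    have hcast : ((q - j₀ : ℕ) : ℝ) = (q : ℝ) - (j₀ : ℝ) := by
      have : j₀ ≤ q := hq
      push_cast [this]
      ring
    calc (R.card : ℝ) * ((q : ℕ) - (j₀ : ℝ)) = (F.card : ℝ) := by
          rw [hcard, ← hcast]
          push_cast
          ring
      _ ≤ _ := by exact_mod_cast hle
  have hfg : ∀ n : ℕ, 1 ≤ n → g n ≤ f n := by
    intro n hn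
    have hnR : (0 : ℝ) < n := by exact_mod_cast hn
    have hKR : (0 : ℝ) < K := by exact_mod_cast hK
    have hRc0 : (0 : ℝ) ≤ R.card := by positivity
    have hdm := Nat.div_add_mod n K
    have hmlt : n % K < K := Nat.mod_lt _ hK
    have hdiv2 : (n : ℝ) < ((n / K : ℕ) + 1) * K := by
      have h' : n < K * (n / K) + K := by omega
      have := (Nat.cast_lt (α := ℝ)).mpr h'
      push_cast at this
      nlinarith [this]
    rcases le_or_gt j₀ (n / K) with hq | hq
    · have h1 := hcount n hq
      set qq := ((n / K : ℕ) : ℝ) with hqq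
      have key2 : (R.card : ℝ) / K ≤ R.card * (qq + 1) / n := by
        rw [div_le_div_iff₀ hKR hnR]
        nlinarith [hdiv2, hRc0]
      have key3 : (R.card : ℝ) * (qq - (j₀ : ℝ)) / n ≤ f n := by
        have : f n = ((X ∩ Set.Icc 1 n).ncard : ℝ) / n := rfl
        rw [this]
        exact (div_le_div_iff_of_pos_right hnR).mpr h1
      have e1 : (R.card : ℝ) * (qq + 1) / n - (R.card : ℝ) * ((j₀ : ℝ) + 1) / n
          = (R.card : ℝ) * (qq - (j₀ : ℝ)) / n := by
        field_simp
        ring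
      have hgn : g n = (R.card : ℝ) / K - (R.card : ℝ) * ((j₀ : ℝ) + 1) / n := rfl
      rw [hgn]
      linarith
    · have hq1 : ((n / K : ℕ) : ℝ) + 1 ≤ (j₀ : ℝ) := by exact_mod_cast hq
      have hle0 : g n ≤ 0 := by
        rw [hg]
        simp only
        rw [sub_nonpos, div_le_div_iff₀ hKR hnR]
        have hn2 : (n : ℝ) ≤ ((j₀ : ℝ) + 1) * K := by
          nlinarith [mul_le_mul_of_nonneg_right hq1 hKR.le]
        nlinarith [mul_le_mul_of_nonneg_left hn2 hRc0]
      exact le_trans hle0 (count_nonneg X n)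
  have hgt : Filter.Tendsto g Filter.atTop (nhds ((R.card : ℝ) / K)) := by
    have h0 : Filter.Tendsto (fun n : ℕ => ((R.card : ℝ) * ((j₀ : ℝ) + 1)) / n)
        Filter.atTop (nhds 0) := tendsto_const_div_atTop_nhds_zero_nat _
    have := Filter.Tendsto.sub (tendsto_const_nhds (x := (R.card : ℝ) / K)) h0
    simpa [hg] using this
  have hglim : Filter.limsup g Filter.atTop = (R.card : ℝ) / K := hgt.limsup_eq
  rw [upperDensity] at *
  rw [← hglim]
  apply Filter.limsup_le_limsup
  · exact Filter.eventually_atTop.mpr ⟨1, hfg⟩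
  · exact hgt.isBoundedUnder_ge.isCoboundedUnder_le
  · exact Filter.isBoundedUnder_of ⟨1, fun n => count_le_one X n⟩

lemma exists_cover {B : Set ℕ} (hB0 : buckUpper B = 0) {δ : ℝ} (hδ : 0 < δ) :
    ∃ A : Set ℕ, IsAPUnion A ∧ B ⊆ A ∧ upperDensity A < δ := by
  have hne : {d : ℝ | ∃ A : Set ℕ, IsAPUnion A ∧ B ⊆ A ∧ d = upperDensity A}.Nonempty := by
    refine ⟨upperDensity Set.univ, Set.univ, ?_, Set.subset_univ B, rfl⟩
    refine ⟨{(1, 0)}, by simp, ?_⟩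
    ext n
    simp
  have hbdd : BddBelow {d : ℝ | ∃ A : Set ℕ, IsAPUnion A ∧ B ⊆ A ∧ d = upperDensity A} := by
    refine ⟨0, fun d hd => ?_⟩
    obtain ⟨A, _, _, rfl⟩ := hd
    exact upperDensity_nonneg A
  have hlt : sInf {d : ℝ | ∃ A : Set ℕ, IsAPUnion A ∧ B ⊆ A ∧ d = upperDensity A} < δ := by
    rw [show sInf {d : ℝ | ∃ A : Set ℕ, IsAPUnion A ∧ B ⊆ A ∧ d = upperDensity A}
      = buckUpper B from rfl, hB0]
    exact hδ
  obtain ⟨d, hd, hdlt⟩ := (csInf_lt_iff hbdd hne).mp hlt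
  obtain ⟨A, h1, h2, rfl⟩ := hd
  exact ⟨A, h1, h2, hdlt⟩

lemma smallMod {B : Set ℕ} (hB0 : buckUpper B = 0) :
    ∀ δ : ℝ, 0 < δ → ∀ k₀ : ℕ, 0 < k₀ →
    ∃ K : ℕ, k₀ ∣ K ∧ 0 < K ∧ ((RES B K).card : ℝ) < δ * K := by
  intro δ hδ k₀ hk₀
  obtain ⟨A, ⟨S, hS1, hS2⟩, hBA, hud⟩ := exists_cover hB0 hδ
  set K₁ := ∏ p ∈ S, p.1 with hK₁
  have hK₁pos : 0 < K₁ := Finset.prod_pos fun p hp => hS1 p hp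
  have hwit : ∀ r ∈ RES A K₁, ∃ w : ℕ, ∀ n : ℕ, w ≤ n → n % K₁ = r → n ∈ A := by
    intro r hr
    obtain ⟨hrK, a, ha, har⟩ := mem_RES.mp hr
    refine ⟨a, fun n hn hnr => ?_⟩
    rw [hS2] at ha ⊢
    simp only [Set.mem_iUnion] at ha ⊢
    obtain ⟨p, hp, m, hm⟩ := ha
    refine ⟨p, hp, ?_⟩
    have hdvd : p.1 ∣ K₁ := Finset.dvd_prod_of_mem _ hp
    have hmodeq : a ≡ n [MOD K₁] := by
      unfold Nat.ModEq
      rw [har, hnr]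
    have hK₁d : K₁ ∣ n - a := (Nat.modEq_iff_dvd' hn).mp hmodeq
    obtain ⟨c, hc⟩ := hdvd.trans hK₁d
    refine ⟨m + c, ?_⟩
    have hexp : p.1 * (m + c) = p.1 * m + p.1 * c := by ring
    omega
  choose w hw using hwit
  set W₀ := (RES A K₁).attach.sup (fun r => w r.1 r.2) with hW₀
  have htail : ∀ r ∈ RES A K₁, ∀ n : ℕ, W₀ ≤ n → n % K₁ = r → n ∈ A := by
    intro r hr n hn hnr
    apply hw r hr n _ hnr
    exact le_trans (Finset.le_sup (f := fun x : {x // x ∈ RES A K₁} => w x.1 x.2)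
      (Finset.mem_attach _ ⟨r, hr⟩)) hn
  have hub : ((RES A K₁).card : ℝ) / K₁ ≤ upperDensity A :=
    ud_ge A K₁ hK₁pos (RES A K₁) (Finset.filter_subset _ _) W₀ htail
  have hAK₁ : ((RES A K₁).card : ℝ) < δ * K₁ := by
    have hKR : (0 : ℝ) < K₁ := by exact_mod_cast hK₁pos
    have := lt_of_le_of_lt hub hud
    rw [div_lt_iff₀ hKR] at this
    linarith
  refine ⟨k₀ * K₁, Dvd.intro _ rfl, Nat.mul_pos hk₀ hK₁pos, ?_⟩
  have h1 : (RES B (k₀ * K₁)).card ≤ (RES A (k₀ * K₁)).card :=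
    Finset.card_le_card (RES_mono hBA _)
  have h2 : (RES A (k₀ * K₁)).card ≤ k₀ * (RES A K₁).card := by
    have := RES_card_mul A (Dvd.intro_left k₀ rfl : K₁ ∣ k₀ * K₁) hK₁pos
    rwa [Nat.mul_div_cancel _ hK₁pos] at this
  have hk₀R : (0 : ℝ) < k₀ := by exact_mod_cast hk₀
  calc ((RES B (k₀ * K₁)).card : ℝ) ≤ (k₀ : ℝ) * (RES A K₁).card := by
        exact_mod_cast le_trans h1 h2
    _ < (k₀ : ℝ) * (δ * K₁) := by
        apply mul_lt_mul_of_pos_left hAK₁ hk₀R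
    _ = δ * (k₀ * K₁ : ℕ) := by push_cast; ring

/-! ### The construction: state quantities -/

noncomputable def wn (B : Set ℕ) (K : ℕ) (S : Finset ℕ) : ℝ := ((WOF B K S).card : ℝ)

noncomputable def cn (B : Set ℕ) (K : ℕ) (S T : Finset ℕ) : ℝ :=
  ((WOF B K T \ WOF B K S).card : ℝ)

noncomputable def sg (B : Set ℕ) (α : ℝ) (K : ℕ) (S T : Finset ℕ) : ℝ :=
  wn B K S + cn B K S T - α * K

lemma cn_nonneg (B : Set ℕ) (K : ℕ) (S T : Finset ℕ) : 0 ≤ cn B K S T := by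
  unfold cn; positivity

lemma wn_nonneg (B : Set ℕ) (K : ℕ) (S : Finset ℕ) : 0 ≤ wn B K S := by
  unfold wn; positivity

/-- Accounting for a single burn step: move `t` from the reserve into `S`. -/
lemma burn_step (B : Set ℕ) (K : ℕ) {T : Finset ℕ} {t : ℕ} (ht : t ∈ T)
    (S : Finset ℕ) :
    ∃ d : ℝ, 0 ≤ d ∧ d ≤ ((RES B K).card : ℝ) ∧
      wn B K (insert t S) = wn B K S + d ∧
      cn B K (insert t S) (T.erase t) = cn B K S T - d := by
  have hW1 : WOF B K (insert t S) = spr B K t ∪ WOF B K S := WOF_insert B K t S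
  have hR : WOF B K T = spr B K t ∪ WOF B K (T.erase t) := WOF_erase_union B K t T ht
  refine ⟨((spr B K t \ WOF B K S).card : ℝ), by positivity, ?_, ?_, ?_⟩
  · exact_mod_cast le_trans (Finset.card_le_card Finset.sdiff_subset) (spr_card_le B K t)
  · unfold wn
    rw [hW1]
    have h := Finset.card_sdiff_add_card (spr B K t) (WOF B K S)
    have h' := congrArg (Nat.cast : ℕ → ℝ) h
    push_cast at h'
    linarith
  · unfold cn
    have hCL1 : WOF B K (T.erase t) \ WOF B K (insert t S)
        = (WOF B K T \ WOF B K S) \ spr B K t := by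
      ext x
      rw [hW1]
      constructor
      · intro hx
        obtain ⟨hx1, hx2⟩ := Finset.mem_sdiff.mp hx
        refine Finset.mem_sdiff.mpr ⟨Finset.mem_sdiff.mpr ⟨?_, ?_⟩, ?_⟩
        · rw [hR]; exact Finset.mem_union_right _ hx1
        · intro h; exact hx2 (Finset.mem_union_right _ h)
        · intro h; exact hx2 (Finset.mem_union_left _ h)
      · intro hx
        obtain ⟨hx1, hx2⟩ := Finset.mem_sdiff.mp hx
        obtain ⟨hxT, hxW⟩ := Finset.mem_sdiff.mp hx1
        refine Finset.mem_sdiff.mpr ⟨?_, ?_⟩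
        · rw [hR] at hxT
          rcases Finset.mem_union.mp hxT with h | h
          · exact absurd h hx2
          · exact h
        · intro h
          rcases Finset.mem_union.mp h with h' | h'
          · exact hx2 h'
          · exact hxW h'
    rw [hCL1]
    have hint : (WOF B K T \ WOF B K S) ∩ spr B K t = spr B K t \ WOF B K S := by
      ext x
      constructor
      · intro hx
        obtain ⟨hx1, hx2⟩ := Finset.mem_inter.mp hx
        exact Finset.mem_sdiff.mpr ⟨hx2, (Finset.mem_sdiff.mp hx1).2⟩
      · intro hx
        obtain ⟨hx1, hx2⟩ := Finset.mem_sdiff.mp hx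
        refine Finset.mem_inter.mpr ⟨Finset.mem_sdiff.mpr ⟨?_, hx2⟩, hx1⟩
        rw [hR]
        exact Finset.mem_union_left _ hx1
    have h := Finset.card_sdiff_add_card_inter (WOF B K T \ WOF B K S) (spr B K t)
    rw [hint] at h
    have h' := congrArg (Nat.cast : ℕ → ℝ) h
    push_cast at h'
    linarith

/-- Accounting for a single drop step: remove `t` from the reserve. -/
lemma drop_step (B : Set ℕ) (K : ℕ) {T : Finset ℕ} {t : ℕ} (ht : t ∈ T)
    (S : Finset ℕ) :
    cn B K S T - ((RES B K).card : ℝ) ≤ cn B K S (T.erase t) ∧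
      cn B K S (T.erase t) ≤ cn B K S T := by
  have hR : WOF B K T = spr B K t ∪ WOF B K (T.erase t) := WOF_erase_union B K t T ht
  constructor
  · have hsub : (WOF B K T \ WOF B K S) \ (WOF B K (T.erase t) \ WOF B K S)
        ⊆ spr B K t := by
      intro x hx
      obtain ⟨hx1, hx2⟩ := Finset.mem_sdiff.mp hx
      obtain ⟨hxT, hxW⟩ := Finset.mem_sdiff.mp hx1
      rw [hR] at hxT
      rcases Finset.mem_union.mp hxT with h | h
      · exact h
      · exact absurd (Finset.mem_sdiff.mpr ⟨h, hxW⟩) hx2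
    have h1 : (WOF B K T \ WOF B K S).card
        ≤ (WOF B K (T.erase t) \ WOF B K S).card + (spr B K t).card := by
      calc (WOF B K T \ WOF B K S).card
          ≤ ((WOF B K (T.erase t) \ WOF B K S) ∪ ((WOF B K T \ WOF B K S) \ (WOF B K (T.erase t) \ WOF B K S))).card := by
            apply Finset.card_le_card
            intro x hx
            by_cases h : x ∈ WOF B K (T.erase t) \ WOF B K S
            · exact Finset.mem_union_left _ h
            · exact Finset.mem_union_right _ (Finset.mem_sdiff.mpr ⟨hx, h⟩)
        _ ≤ (WOF B K (T.erase t) \ WOF B K S).card + ((WOF B K T \ WOF B K S) \ (WOF B K (T.erase t) \ WOF B K S)).card :=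
            Finset.card_union_le _ _
        _ ≤ _ := by
            exact Nat.add_le_add_left (Finset.card_le_card hsub) _
    have h2 : (spr B K t).card ≤ (RES B K).card := spr_card_le B K t
    unfold cn
    have h' := congrArg (Nat.cast : ℕ → ℝ) (rfl : (0:ℕ) = 0)
    have c1 : ((WOF B K T \ WOF B K S).card : ℝ)
        ≤ ((WOF B K (T.erase t) \ WOF B K S).card : ℝ) + ((RES B K).card : ℝ) := by
      exact_mod_cast le_trans h1 (Nat.add_le_add_left h2 _)
    linarith
  · unfold cn
    have : WOF B K (T.erase t) \ WOF B K S ⊆ WOF B K T \ WOF B K S := by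
      apply Finset.sdiff_subset_sdiff _ subset_rfl
      exact WOF_mono B K (Finset.erase_subset _ _)
    exact_mod_cast Finset.card_le_card this

/-- The burn loop: move reserve classes into `S` until the clear mass drops to `2σ`. -/
lemma burn_ex (B : Set ℕ) (α : ℝ) (K : ℕ) (e : ℝ)
    (hres : ((RES B K).card : ℝ) ≤ e) :
    ∀ N : ℕ, ∀ T S : Finset ℕ, T.card ≤ N →
    0 < sg B α K S T →
    wn B K S < α * K →
    2 * e ≤ sg B α K S T →
    ∃ S' T' : Finset ℕ, S ⊆ S' ∧ T' ⊆ T ∧ S' ∪ T' = S ∪ T ∧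
      sg B α K S' T' = sg B α K S T ∧
      cn B K S' T' ≤ 2 * sg B α K S T ∧
      wn B K S' < α * K := by
  intro N
  induction N with
  | zero =>
    intro T S hcard h1 h2 h3
    have hT : T = ∅ := Finset.card_eq_zero.mp (Nat.le_zero.mp hcard)
    subst hT
    refine ⟨S, ∅, subset_rfl, subset_rfl, rfl, rfl, ?_, h2⟩
    have hcn : cn B K S ∅ = 0 := by
      unfold cn WOF
      simp
    rw [hcn]
    linarith
  | succ N ih =>
    intro T S hcard h1 h2 h3
    by_cases hcl : cn B K S T ≤ 2 * sg B α K S T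
    · exact ⟨S, T, subset_rfl, subset_rfl, rfl, rfl, hcl, h2⟩
    · push_neg at hcl
      have hTne : T.Nonempty := by
        by_contra h
        rw [Finset.not_nonempty_iff_eq_empty] at h
        subst h
        have hcn : cn B K S ∅ = 0 := by
          unfold cn WOF
          simp
        rw [hcn] at hcl
        linarith
      obtain ⟨t, ht⟩ := hTne
      obtain ⟨d, hd0, hde, hwacc, hcacc⟩ := burn_step B K ht S
      have hde' : d ≤ e := le_trans hde hres
      have hsg1 : sg B α K (insert t S) (T.erase t) = sg B α K S T := by
        unfold sg
        rw [hwacc, hcacc]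
        ring
      have hw1 : wn B K (insert t S) < α * K := by
        -- cl₁ = cl - d > 2σ - e ≥ σ + (σ - e) > σ  hence  w₁ < αK
        have hcl1 : cn B K (insert t S) (T.erase t) > sg B α K S T := by
          rw [hcacc]
          linarith
        have : sg B α K (insert t S) (T.erase t)
            = wn B K (insert t S) + cn B K (insert t S) (T.erase t) - α * K := rfl
        rw [hsg1] at this
        linarith
      have hcard1 : (T.erase t).card ≤ N := by
        rw [Finset.card_erase_of_mem ht]
        omega
      obtain ⟨S', T', hs1, hs2, hs3, hs4, hs5, hs6⟩ :=
        ih (T.erase t) (insert t S) hcard1 (by rw [hsg1]; exact h1) hw1 (by rw [hsg1]; exact h3)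
      refine ⟨S', T', ?_, ?_, ?_, ?_, ?_, hs6⟩
      · exact le_trans (Finset.subset_insert t S) hs1
      · exact le_trans hs2 (Finset.erase_subset _ _)
      · rw [hs3]
        ext a
        simp only [Finset.mem_union, Finset.mem_insert, Finset.mem_erase]
        by_cases hat : a = t
        · subst hat; tauto
        · tauto
      · rw [hs4, hsg1]
      · rw [hsg1] at hs5
        exact hs5

/-- The drop loop: remove reserve classes until `σ` drops to (just below) `τ`. -/
lemma drop_ex (B : Set ℕ) (α : ℝ) (K : ℕ) (e : ℝ)
    (hres : ((RES B K).card : ℝ) ≤ e) (S : Finset ℕ) (τ : ℝ) (hτ : 0 ≤ τ)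
    (hw : wn B K S < α * K) :
    ∀ N : ℕ, ∀ T : Finset ℕ, T.card ≤ N →
    τ < sg B α K S T →
    ∃ T' : Finset ℕ, T' ⊆ T ∧ τ - e < sg B α K S T' ∧ sg B α K S T' ≤ τ := by
  intro N
  induction N with
  | zero =>
    intro T hcard h1
    have hT : T = ∅ := Finset.card_eq_zero.mp (Nat.le_zero.mp hcard)
    subst hT
    exfalso
    have hcn : cn B K S ∅ = 0 := by
      unfold cn WOF
      simp
    have : sg B α K S ∅ = wn B K S - α * K := by
      unfold sg
      rw [hcn]
      ring
    rw [this] at h1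
    linarith
  | succ N ih =>
    intro T hcard h1
    have hTne : T.Nonempty := by
      by_contra h
      rw [Finset.not_nonempty_iff_eq_empty] at h
      subst h
      have hcn : cn B K S ∅ = 0 := by
        unfold cn WOF
        simp
      have : sg B α K S ∅ = wn B K S - α * K := by
        unfold sg
        rw [hcn]
        ring
      rw [this] at h1
      linarith
    obtain ⟨t, ht⟩ := hTne
    obtain ⟨hlo, hhi⟩ := drop_step B K ht S
    by_cases hstop : sg B α K S (T.erase t) ≤ τ
    · refine ⟨T.erase t, Finset.erase_subset _ _, ?_, hstop⟩
      have : sg B α K S (T.erase t) ≥ sg B α K S T - e := by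
        unfold sg
        have := le_trans (by linarith [hlo] : cn B K S T - e ≤ cn B K S (T.erase t))
          (le_refl _)
        linarith
      linarith
    · push_neg at hstop
      have hcard1 : (T.erase t).card ≤ N := by
        rw [Finset.card_erase_of_mem ht]
        omega
      obtain ⟨T', h1', h2', h3'⟩ := ih (T.erase t) hcard1 hstop
      exact ⟨T', le_trans h1' (Finset.erase_subset _ _), h2', h3'⟩

/-- Rebuild the reserve at a finer modulus, with one reserve class per clear class. -/
lemma rebuild_ex (B : Set ℕ) (Kc K : ℕ) (hd : Kc ∣ K) (hKc : 0 < Kc) (hK : 0 < K)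
    (Tc : Finset ℕ) (S T : Finset ℕ)
    (hTsub : ∀ t ∈ T, t % Kc ∈ Tc)
    (hcov : ∀ x : ℕ, x < K → x % Kc ∈ WOF B Kc Tc → x ∈ WOF B K S ∪ WOF B K T) :
    ∃ T'' : Finset ℕ, T''.card ≤ (WOF B K T \ WOF B K S).card ∧
      T'' ⊆ Finset.range K ∧
      WOF B K T'' \ WOF B K S = WOF B K T \ WOF B K S ∧
      (∀ t ∈ T'', t % Kc ∈ Tc) ∧
      WOF B K T'' ⊆ WOF B K S ∪ WOF B K T := by
  have hpick : ∀ c ∈ WOF B K T \ WOF B K S,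
      ∃ t'' : ℕ, c ∈ spr B K t'' ∧ t'' < K ∧ t'' % Kc ∈ Tc := by
    intro c hc
    obtain ⟨hcT, hcW⟩ := Finset.mem_sdiff.mp hc
    obtain ⟨t, ht, hcs⟩ := Finset.mem_biUnion.mp hcT
    obtain ⟨r, hr, hrc⟩ := Finset.mem_image.mp hcs
    have hcK : c < K := Finset.mem_range.mp (spr_subset_range B K t hK hcs)
    have hrK : r < K := (mem_RES.mp hr).1
    set t'' := (c + (K - r)) % K with ht''def
    have hkey : (t'' + r) % K = c := by
      rw [ht''def, Nat.mod_add_mod]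
      have : c + (K - r) + r = c + K := by omega
      rw [this, Nat.add_mod_right, Nat.mod_eq_of_lt hcK]
    refine ⟨t'', Finset.mem_image.mpr ⟨r, hr, hkey⟩, Nat.mod_lt _ hK, ?_⟩
    have hmodK : (t'' + r) ≡ (t + r) [MOD K] := by
      unfold Nat.ModEq
      rw [hkey, ← hrc]
    have hmodKc : (t'' + r) ≡ (t + r) [MOD Kc] := Nat.ModEq.of_dvd hd hmodK
    have hcancel : t'' ≡ t [MOD Kc] := Nat.ModEq.add_right_cancel' r hmodKc
    have : t'' % Kc = t % Kc := hcancel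
    rw [this]
    exact hTsub t ht
  choose f hf using hpick
  let CL := WOF B K T \ WOF B K S
  refine ⟨CL.attach.image (fun c => f c.1 c.2), ?_, ?_, ?_, ?_, ?_⟩
  · exact le_trans Finset.card_image_le (by rw [Finset.card_attach])
  · intro x hx
    obtain ⟨c, _, rfl⟩ := Finset.mem_image.mp hx
    exact Finset.mem_range.mpr (hf c.1 c.2).2.1
  · have hsub2 : WOF B K (CL.attach.image (fun c => f c.1 c.2)) ⊆
        WOF B K S ∪ WOF B K T := by
      intro x hx
      obtain ⟨t'', ht'', hxs⟩ := Finset.mem_biUnion.mp hx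
      obtain ⟨c, _, rfl⟩ := Finset.mem_image.mp ht''
      have hxK : x < K := Finset.mem_range.mp (spr_subset_range B K _ hK hxs)
      have hxKc : x % Kc ∈ spr B Kc (f c.1 c.2 % Kc) := spr_proj hd hKc hxs
      have hxW : x % Kc ∈ WOF B Kc Tc := by
        apply Finset.subset_biUnion_of_mem (spr B Kc) (hf c.1 c.2).2.2
        exact hxKc
      exact hcov x hxK hxW
    apply Finset.Subset.antisymm
    · intro x hx
      obtain ⟨hx1, hx2⟩ := Finset.mem_sdiff.mp hx
      have := hsub2 hx1
      rcases Finset.mem_union.mp this with h | h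
      · exact absurd h hx2
      · exact Finset.mem_sdiff.mpr ⟨h, hx2⟩
    · intro c hc
      refine Finset.mem_sdiff.mpr ⟨?_, (Finset.mem_sdiff.mp hc).2⟩
      apply Finset.mem_biUnion.mpr
      refine ⟨f c hc, Finset.mem_image.mpr ⟨⟨c, hc⟩, Finset.mem_attach _ _, rfl⟩, ?_⟩
      exact (hf c hc).1
  · intro t ht
    obtain ⟨c, _, rfl⟩ := Finset.mem_image.mp ht
    exact (hf c.1 c.2).2.2
  · intro x hx
    obtain ⟨t'', ht'', hxs⟩ := Finset.mem_biUnion.mp hx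
    obtain ⟨c, _, rfl⟩ := Finset.mem_image.mp ht''
    have hxK : x < K := Finset.mem_range.mp (spr_subset_range B K _ hK hxs)
    have hxKc : x % Kc ∈ spr B Kc (f c.1 c.2 % Kc) := spr_proj hd hKc hxs
    have hxW : x % Kc ∈ WOF B Kc Tc := by
      apply Finset.subset_biUnion_of_mem (spr B Kc) (hf c.1 c.2).2.2
      exact hxKc
    exact hcov x hxK hxW

/-! ### State record and invariants -/

structure St where
  K : ℕ
  S : Finset ℕ
  T : Finset ℕ

structure Inv (B : Set ℕ) (α : ℝ) (j : ℕ) (st : St) : Prop where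
  hKpos : 0 < st.K
  hK2 : 2 ^ j ≤ st.K
  hS : st.S ⊆ Finset.range st.K
  hT : st.T ⊆ Finset.range st.K
  hspos : 0 < sg B α st.K st.S st.T
  hsle : sg B α st.K st.S st.T ≤ (st.K : ℝ) / 2 ^ j
  hw : wn B st.K st.S < α * st.K

structure Extra (B : Set ℕ) (α : ℝ) (st : St) : Prop where
  hcl : cn B st.K st.S st.T ≤ 8 * sg B α st.K st.S st.T
  hTc : (st.T.card : ℝ) ≤ 40 * sg B α st.K st.S st.T

structure Links (B : Set ℕ) (st st' : St) : Prop where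
  dvd : st.K ∣ st'.K
  hSmono : ∀ n : ℕ, n % st.K ∈ st.S → n % st'.K ∈ st'.S
  hATchain : ∀ n : ℕ, n % st'.K ∈ st'.S ∪ st'.T → n % st.K ∈ st.S ∪ st.T
  hWmono : ∀ n : ℕ, n % st.K ∈ WOF B st.K st.S → n % st'.K ∈ WOF B st'.K st'.S
  hUchain : ∀ n : ℕ, n % st'.K ∈ WOF B st'.K st'.S ∪ WOF B st'.K st'.T →
    n % st.K ∈ WOF B st.K st.S ∪ WOF B st.K st.T
  humono : (st.S.card : ℝ) * st'.K ≤ (st'.S.card : ℝ) * st.K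

/-- The main stage construction. -/
lemma stage_ex (B : Set ℕ) (hB0 : buckUpper B = 0) (α : ℝ)
    (j : ℕ) (st : St) (h : Inv B α j st) :
    ∃ st' : St, Inv B α (j + 1) st' ∧ Extra B α st' ∧ Links B st st' := by
  obtain ⟨K, S0, T0⟩ := st
  obtain ⟨hKpos, hK2, hS0, hT0, hspos, hsle, hw⟩ := h
  simp only at hKpos hK2 hS0 hT0 hspos hsle hw ⊢
  have hKR : (0 : ℝ) < K := by exact_mod_cast hKpos
  set σ := sg B α K S0 T0 with hσdef
  set δ := σ / (100 * K) with hδdef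
  have hδpos : 0 < δ := by
    rw [hδdef]
    positivity
  have hk₀pos : 0 < K * 2 ^ (j + 1) := Nat.mul_pos hKpos (Nat.pow_pos (by norm_num))
  obtain ⟨K', hdvd0, hK'pos, hres0⟩ := smallMod hB0 δ hδpos (K * 2 ^ (j + 1)) hk₀pos
  have hdvd : K ∣ K' := dvd_trans (Dvd.intro _ rfl) hdvd0
  have h2K' : (2 ^ (j + 1) : ℕ) ∣ K' := dvd_trans (Dvd.intro_left _ rfl) hdvd0
  have hK'ge : (2 ^ (j + 1) : ℕ) ≤ K' := Nat.le_of_dvd hK'pos h2K'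
  set M := K' / K with hMdef
  have hKM : K * M = K' := Nat.mul_div_cancel' hdvd
  have hMpos : 0 < M := by
    rcases Nat.eq_zero_or_pos M with h | h
    · rw [h, Nat.mul_zero] at hKM
      omega
    · exact h
  have hK'R : (0 : ℝ) < K' := by exact_mod_cast hK'pos
  have hMR : (K' : ℝ) = M * K := by
    rw [← hKM]
    push_cast
    ring
  have hMRpos : (0 : ℝ) < M := by exact_mod_cast hMpos
  set S1 := liftF K K' S0 with hS1def
  set T1 := liftF K K' T0 with hT1def
  have hW1 : WOF B K' S1 = liftF K K' (WOF B K S0) := WOF_liftF B hdvd hKpos hK'pos hS0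
  have hR1 : WOF B K' T1 = liftF K K' (WOF B K T0) := WOF_liftF B hdvd hKpos hK'pos hT0
  have hCL1eq : WOF B K' T1 \ WOF B K' S1 = liftF K K' (WOF B K T0 \ WOF B K S0) := by
    rw [hW1, hR1, liftF_sdiff]
  have hwn1 : wn B K' S1 = M * wn B K S0 := by
    unfold wn
    rw [hW1, liftF_card hdvd hKpos (WOF_subset_range _ _ _ hKpos)]
    push_cast
    ring
  have hcn1 : cn B K' S1 T1 = M * cn B K S0 T0 := by
    unfold cn
    rw [hCL1eq, liftF_card hdvd hKpos (Finset.sdiff_subset.trans (WOF_subset_range _ _ _ hKpos))]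
    push_cast
    ring
  have hsg1 : sg B α K' S1 T1 = M * σ := by
    unfold sg
    rw [hwn1, hcn1, hMR, hσdef]
    unfold sg
    ring
  set e := δ * K' with hedef
  have hres : ((RES B K').card : ℝ) ≤ e := le_of_lt hres0
  have he_eq : e = M * σ / 100 := by
    rw [hedef, hδdef, hMR]
    field_simp
  have hMσpos : 0 < M * σ := by positivity
  -- burn
  obtain ⟨S3, T3, hb1, hb2, hb3, hb4, hb5, hb6⟩ :=
    burn_ex B α K' e hres T1.card T1 S1 le_rfl
      (by rw [hsg1]; exact hMσpos)
      (by
        rw [hwn1, hMR]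
        calc (M : ℝ) * wn B K S0 < M * (α * K) := by
              apply mul_lt_mul_of_pos_left hw hMRpos
          _ = α * ((M : ℝ) * K) := by ring)
      (by rw [hsg1, he_eq]; linarith)
  rw [hsg1] at hb4 hb5
  -- rebuild
  have hcov : ∀ x : ℕ, x < K' → x % K ∈ WOF B K T0 → x ∈ WOF B K' S3 ∪ WOF B K' T3 := by
    intro x hx hxW
    have hx1 : x ∈ WOF B K' T1 := by
      rw [hR1, mem_liftF]
      exact ⟨hx, hxW⟩
    have : x ∈ WOF B K' (S1 ∪ T1) := by
      rw [WOF_union]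
      exact Finset.mem_union_right _ hx1
    rw [← hb3, WOF_union] at this
    exact this
  obtain ⟨T5, hr1, hr2, hr3, hr4, hr5⟩ :=
    rebuild_ex B K K' hdvd hKpos hK'pos T0 S3 T3
      (fun t ht => (mem_liftF.mp (hb2 ht)).2) hcov
  have hsg5 : sg B α K' S3 T5 = sg B α K' S3 T3 := by
    unfold sg cn
    rw [hr3]
  -- drop
  obtain ⟨T6, hd1, hd2, hd3⟩ :=
    drop_ex B α K' e hres S3 (M * σ / 2) (by positivity) hb6 T5.card T5 le_rfl
      (by rw [hsg5, hb4]; linarith)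
  refine ⟨⟨K', S3, T6⟩, ?_, ?_, ?_⟩
  · -- Inv (j+1)
    have hσ6lo : M * σ / 2 - e < sg B α K' S3 T6 := hd2
    have hσ6hi : sg B α K' S3 T6 ≤ M * σ / 2 := hd3
    have hσ6pos : 0 < sg B α K' S3 T6 := by
      rw [he_eq] at hσ6lo
      linarith
    refine ⟨hK'pos, hK'ge, ?_, ?_, hσ6pos, ?_, ?_⟩
    · -- S3 ⊆ range K'
      intro x hx
      have : x ∈ S1 ∪ T1 := by
        rw [← hb3]
        exact Finset.mem_union_left _ hx
      rcases Finset.mem_union.mp this with h | h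
      · exact Finset.mem_range.mpr (mem_liftF.mp h).1
      · exact Finset.mem_range.mpr (mem_liftF.mp h).1
    · exact fun x hx => hr2 (hd1 hx)
    · -- hsle
      have h1 : σ ≤ (K : ℝ) / 2 ^ j := hsle
      have h2pow : (0 : ℝ) < 2 ^ j := by positivity
      calc sg B α K' S3 T6 ≤ M * σ / 2 := hσ6hi
        _ ≤ M * ((K : ℝ) / 2 ^ j) / 2 := by
            have := mul_le_mul_of_nonneg_left h1 hMRpos.le
            linarith
        _ = (K' : ℝ) / 2 ^ (j + 1) := by
            rw [hMR, pow_succ]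
            field_simp
    · -- w < α K'
      exact hb6
  · -- Extra
    have hσ6lo : M * σ / 2 - e < sg B α K' S3 T6 := hd2
    have hσ6hi : sg B α K' S3 T6 ≤ M * σ / 2 := hd3
    have hσ6lo' : (49 / 100) * (M * σ) < sg B α K' S3 T6 := by
      rw [he_eq] at hσ6lo
      linarith
    constructor
    · -- cl₆ ≤ 8 σ₆
      have hcl6 : cn B K' S3 T6 = sg B α K' S3 T6 - wn B K' S3 + α * K' := by
        unfold sg
        ring
      have hcl3 : wn B K' S3 + cn B K' S3 T3 - α * K' = M * σ := hb4
      have : α * (K' : ℝ) - wn B K' S3 ≤ M * σ := by linarith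
      rw [hcl6]
      simp only
      linarith
    · -- |T6| ≤ 40 σ₆
      have h1 : (T6.card : ℝ) ≤ (T5.card : ℝ) := by
        exact_mod_cast Finset.card_le_card hd1
      have h2 : (T5.card : ℝ) ≤ cn B K' S3 T3 := by
        unfold cn
        exact_mod_cast hr1
      simp only
      linarith
  · -- Links
    have hKmod : ∀ n : ℕ, n % K' % K = n % K := fun n => Nat.mod_mod_of_dvd n hdvd
    refine ⟨hdvd, ?_, ?_, ?_, ?_, ?_⟩
    · intro n hn
      apply hb1
      rw [hS1def, mem_liftF]
      exact ⟨Nat.mod_lt _ hK'pos, by rw [hKmod]; exact hn⟩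
    · intro n hn
      simp only at hn
      rcases Finset.mem_union.mp hn with h | h
      · have : n % K' ∈ S1 ∪ T1 := by
          rw [← hb3]
          exact Finset.mem_union_left _ h
        rcases Finset.mem_union.mp this with h' | h'
        · exact Finset.mem_union_left _ (by rw [← hKmod n]; exact (mem_liftF.mp h').2)
        · exact Finset.mem_union_right _ (by rw [← hKmod n]; exact (mem_liftF.mp h').2)
      · have h5 := hr4 _ (hd1 h)
        rw [hKmod n] at h5
        exact Finset.mem_union_right _ h5
    · intro n hn
      apply WOF_mono B K' hb1
      rw [hW1, mem_liftF]
      exact ⟨Nat.mod_lt _ hK'pos, by rw [hKmod]; exact hn⟩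
    · intro n hn
      simp only at hn
      have hx : n % K' ∈ WOF B K' S3 ∪ WOF B K' T3 := by
        rcases Finset.mem_union.mp hn with h | h
        · exact Finset.mem_union_left _ h
        · exact hr5 (WOF_mono B K' hd1 h)
      rw [← WOF_union, hb3, WOF_union] at hx
      rcases Finset.mem_union.mp hx with h | h
      · rw [hW1, mem_liftF] at h
        rw [← hKmod n]
        exact Finset.mem_union_left _ h.2
      · rw [hR1, mem_liftF] at h
        rw [← hKmod n]
        exact Finset.mem_union_right _ h.2
    · -- humono
      have h1 : (S1.card : ℝ) = M * S0.card := by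
        rw [hS1def, liftF_card hdvd hKpos hS0]
        push_cast
        ring
      have h2 : (S1.card : ℝ) ≤ (S3.card : ℝ) := by
        exact_mod_cast Finset.card_le_card hb1
      simp only
      rw [hMR]
      nlinarith [hKR]

/-! ### The base state and the sequence of stages -/

def st0 : St := ⟨1, ∅, {0}⟩

lemma RES_one {B : Set ℕ} (hB : B.Nonempty) : RES B 1 = {0} := by
  ext r
  rw [mem_RES]
  constructor
  · rintro ⟨h1, _⟩
    interval_cases r
    simp
  · intro h
    rw [Finset.mem_singleton] at h
    subst h
    obtain ⟨b, hb⟩ := hB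
    exact ⟨one_pos, b, hb, Nat.mod_one b⟩

lemma inv0 (B : Set ℕ) (hB : B.Nonempty) (α : ℝ) (hα0 : 0 < α) (hα1 : α < 1) :
    Inv B α 0 st0 := by
  have hW : WOF B 1 (∅ : Finset ℕ) = ∅ := by
    unfold WOF
    simp
  have hR : WOF B 1 ({0} : Finset ℕ) = {0} := by
    unfold WOF
    rw [Finset.singleton_biUnion]
    unfold spr
    rw [RES_one hB]
    simp
  have hwn : wn B 1 (∅ : Finset ℕ) = 0 := by
    unfold wn
    rw [hW]
    simp
  have hcn : cn B 1 (∅ : Finset ℕ) ({0} : Finset ℕ) = 1 := by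
    unfold cn
    rw [hW, hR]
    simp
  have hsg : sg B α 1 (∅ : Finset ℕ) ({0} : Finset ℕ) = 1 - α := by
    unfold sg
    rw [hwn, hcn]
    push_cast
    ring
  refine ⟨one_pos, by norm_num [st0], by simp [st0], ?_, ?_, ?_, ?_⟩
  · intro x hx
    simp only [st0, Finset.mem_singleton] at hx
    subst hx
    simp [st0]
  · show 0 < sg B α 1 ∅ {0}
    rw [hsg]
    linarith
  · show sg B α 1 ∅ {0} ≤ ((st0.K : ℝ)) / 2 ^ 0
    rw [hsg]
    have : ((st0.K : ℝ)) / 2 ^ 0 = 1 := by norm_num [st0]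
    rw [this]
    linarith
  · show wn B 1 ∅ < α * (st0.K : ℝ)
    rw [hwn]
    have : (α : ℝ) * (st0.K : ℝ) = α := by norm_num [st0]
    rw [this]
    linarith

noncomputable def seqSt (B : Set ℕ) (hB : B.Nonempty) (hB0 : buckUpper B = 0)
    (α : ℝ) (hα0 : 0 < α) (hα1 : α < 1) : (j : ℕ) → {st : St // Inv B α j st}
  | 0 => ⟨st0, inv0 B hB α hα0 hα1⟩
  | j + 1 =>
    ⟨(stage_ex B hB0 α j (seqSt B hB hB0 α hα0 hα1 j).1
        (seqSt B hB hB0 α hα0 hα1 j).2).choose,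
     (stage_ex B hB0 α j (seqSt B hB hB0 α hα0 hα1 j).1
        (seqSt B hB hB0 α hα0 hα1 j).2).choose_spec.1⟩

lemma seqSt_spec (B : Set ℕ) (hB : B.Nonempty) (hB0 : buckUpper B = 0)
    (α : ℝ) (hα0 : 0 < α) (hα1 : α < 1) (j : ℕ) :
    Extra B α (seqSt B hB hB0 α hα0 hα1 (j + 1)).1 ∧
      Links B (seqSt B hB hB0 α hα0 hα1 j).1 (seqSt B hB hB0 α hα0 hα1 (j + 1)).1 := by
  have h := (stage_ex B hB0 α j (seqSt B hB hB0 α hα0 hα1 j).1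
      (seqSt B hB hB0 α hα0 hα1 j).2).choose_spec
  exact ⟨h.2.1, h.2.2⟩

section Chain

variable (B : Set ℕ) (hB : B.Nonempty) (hB0 : buckUpper B = 0)
  (α : ℝ) (hα0 : 0 < α) (hα1 : α < 1)

noncomputable def SQ (j : ℕ) : St := (seqSt B hB hB0 α hα0 hα1 j).1

lemma SQ_inv (j : ℕ) : Inv B α j (SQ B hB hB0 α hα0 hα1 j) :=
  (seqSt B hB hB0 α hα0 hα1 j).2

lemma SQ_extra (j : ℕ) : Extra B α (SQ B hB hB0 α hα0 hα1 (j + 1)) :=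
  (seqSt_spec B hB hB0 α hα0 hα1 j).1

lemma SQ_links (j : ℕ) :
    Links B (SQ B hB hB0 α hα0 hα1 j) (SQ B hB hB0 α hα0 hα1 (j + 1)) :=
  (seqSt_spec B hB hB0 α hα0 hα1 j).2

lemma SQ_chain (m : ℕ) : ∀ n : ℕ, m ≤ n →
    (∀ x : ℕ, x % (SQ B hB hB0 α hα0 hα1 m).K ∈ (SQ B hB hB0 α hα0 hα1 m).S →
      x % (SQ B hB hB0 α hα0 hα1 n).K ∈ (SQ B hB hB0 α hα0 hα1 n).S) ∧
    (∀ x : ℕ, x % (SQ B hB hB0 α hα0 hα1 n).K ∈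
        (SQ B hB hB0 α hα0 hα1 n).S ∪ (SQ B hB hB0 α hα0 hα1 n).T →
      x % (SQ B hB hB0 α hα0 hα1 m).K ∈
        (SQ B hB hB0 α hα0 hα1 m).S ∪ (SQ B hB hB0 α hα0 hα1 m).T) ∧
    (∀ x : ℕ, x % (SQ B hB hB0 α hα0 hα1 m).K ∈
        WOF B (SQ B hB hB0 α hα0 hα1 m).K (SQ B hB hB0 α hα0 hα1 m).S →
      x % (SQ B hB hB0 α hα0 hα1 n).K ∈
        WOF B (SQ B hB hB0 α hα0 hα1 n).K (SQ B hB hB0 α hα0 hα1 n).S) ∧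
    (∀ x : ℕ, x % (SQ B hB hB0 α hα0 hα1 n).K ∈
        WOF B (SQ B hB hB0 α hα0 hα1 n).K (SQ B hB hB0 α hα0 hα1 n).S ∪
        WOF B (SQ B hB hB0 α hα0 hα1 n).K (SQ B hB hB0 α hα0 hα1 n).T →
      x % (SQ B hB hB0 α hα0 hα1 m).K ∈
        WOF B (SQ B hB hB0 α hα0 hα1 m).K (SQ B hB hB0 α hα0 hα1 m).S ∪
        WOF B (SQ B hB hB0 α hα0 hα1 m).K (SQ B hB hB0 α hα0 hα1 m).T) ∧
    (((SQ B hB hB0 α hα0 hα1 m).S.card : ℝ) * (SQ B hB hB0 α hα0 hα1 n).K ≤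
      ((SQ B hB hB0 α hα0 hα1 n).S.card : ℝ) * (SQ B hB hB0 α hα0 hα1 m).K) := by
  intro n hn
  induction n, hn using Nat.le_induction with
  | base => exact ⟨fun x h => h, fun x h => h, fun x h => h, fun x h => h, le_refl _⟩
  | succ n hmn ih =>
    obtain ⟨c1, c2, c3, c4, c5⟩ := ih
    have L := SQ_links B hB hB0 α hα0 hα1 n
    refine ⟨?_, ?_, ?_, ?_, ?_⟩
    · exact fun x h => L.hSmono x (c1 x h)
    · exact fun x h => c2 x (L.hATchain x h)
    · exact fun x h => L.hWmono x (c3 x h)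
    · exact fun x h => c4 x (L.hUchain x h)
    · have hKn : (0 : ℝ) < ((SQ B hB hB0 α hα0 hα1 n).K : ℝ) := by
        exact_mod_cast (SQ_inv B hB hB0 α hα0 hα1 n).hKpos
      have hKn1 : (0 : ℝ) ≤ ((SQ B hB hB0 α hα0 hα1 (n + 1)).K : ℝ) := by positivity
      have hKm : (0 : ℝ) ≤ ((SQ B hB hB0 α hα0 hα1 m).K : ℝ) := by positivity
      have h1 := mul_le_mul_of_nonneg_right c5 hKn1
      have h2 := mul_le_mul_of_nonneg_right L.humono hKm
      apply le_of_mul_le_mul_right _ hKn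
      nlinarith [h1, h2]

end Chain

section Assemble

variable (B : Set ℕ) (hB : B.Nonempty) (hB0 : buckUpper B = 0)
  (α : ℝ) (hα0 : 0 < α) (hα1 : α < 1)

/-- The constructed set `A`. -/
def Aset : Set ℕ :=
  {x : ℕ | ∃ j : ℕ, x % (SQ B hB hB0 α hα0 hα1 j).K ∈ (SQ B hB hB0 α hα0 hα1 j).S}

lemma Aset_cover (N : ℕ) : ∀ x ∈ Aset B hB hB0 α hα0 hα1,
    x % (SQ B hB hB0 α hα0 hα1 N).K ∈
      (SQ B hB hB0 α hα0 hα1 N).S ∪ (SQ B hB hB0 α hα0 hα1 N).T := by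
  rintro x ⟨j, hj⟩
  rcases le_total j N with h | h
  · exact Finset.mem_union_left _ ((SQ_chain B hB hB0 α hα0 hα1 j N h).1 x hj)
  · exact (SQ_chain B hB hB0 α hα0 hα1 N j h).2.1 x (Finset.mem_union_left _ hj)

lemma Aset_sup (N : ℕ) : ∀ x : ℕ,
    x % (SQ B hB hB0 α hα0 hα1 N).K ∈ (SQ B hB hB0 α hα0 hα1 N).S →
    x ∈ Aset B hB hB0 α hα0 hα1 := fun x h => ⟨N, h⟩

lemma sumset_cover (N : ℕ) : ∀ n ∈ sumset (Aset B hB hB0 α hα0 hα1) B,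
    n % (SQ B hB hB0 α hα0 hα1 N).K ∈
      WOF B (SQ B hB hB0 α hα0 hα1 N).K (SQ B hB hB0 α hα0 hα1 N).S ∪
      WOF B (SQ B hB hB0 α hα0 hα1 N).K (SQ B hB hB0 α hα0 hα1 N).T := by
  rintro n ⟨x, ⟨j, hj⟩, y, hy, rfl⟩
  have hmem : ∀ m : ℕ, x % (SQ B hB hB0 α hα0 hα1 m).K ∈ (SQ B hB hB0 α hα0 hα1 m).S →
      (x + y) % (SQ B hB hB0 α hα0 hα1 m).K ∈
        WOF B (SQ B hB hB0 α hα0 hα1 m).K (SQ B hB hB0 α hα0 hα1 m).S := by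
    intro m hx
    have hKm : 0 < (SQ B hB hB0 α hα0 hα1 m).K := (SQ_inv B hB hB0 α hα0 hα1 m).hKpos
    apply Finset.mem_biUnion.mpr
    refine ⟨x % (SQ B hB hB0 α hα0 hα1 m).K, hx, ?_⟩
    apply Finset.mem_image.mpr
    refine ⟨y % (SQ B hB hB0 α hα0 hα1 m).K, mod_mem_RES hKm hy, ?_⟩
    exact (Nat.add_mod x y _).symm
  rcases le_total j N with h | h
  · have hx : x % (SQ B hB hB0 α hα0 hα1 N).K ∈ (SQ B hB hB0 α hα0 hα1 N).S :=
      (SQ_chain B hB hB0 α hα0 hα1 j N h).1 x hj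
    exact Finset.mem_union_left _ (hmem N hx)
  · exact (SQ_chain B hB hB0 α hα0 hα1 N j h).2.2.2.1 (x + y)
      (Finset.mem_union_left _ (hmem j hj))

lemma sumset_witness (N : ℕ) : ∃ N₀ : ℕ, ∀ n : ℕ, N₀ ≤ n →
    n % (SQ B hB hB0 α hα0 hα1 N).K ∈
      WOF B (SQ B hB hB0 α hα0 hα1 N).K (SQ B hB hB0 α hα0 hα1 N).S →
    n ∈ sumset (Aset B hB hB0 α hα0 hα1) B := by
  set K := (SQ B hB hB0 α hα0 hα1 N).K with hKdef
  set S := (SQ B hB hB0 α hα0 hα1 N).S with hSdef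
  have hwit : ∀ c ∈ WOF B K S, ∃ b : ℕ, b ∈ B ∧ ∃ s ∈ S, (s + b % K) % K = c := by
    intro c hc
    obtain ⟨s, hs, hcs⟩ := Finset.mem_biUnion.mp hc
    obtain ⟨r, hr, hrc⟩ := Finset.mem_image.mp hcs
    obtain ⟨_, b, hb, hbr⟩ := mem_RES.mp hr
    exact ⟨b, hb, s, hs, by rw [hbr]; exact hrc⟩
  choose bf hbf using hwit
  refine ⟨(WOF B K S).attach.sup (fun c => bf c.1 c.2) + 1, ?_⟩
  intro n hn hnW
  obtain ⟨hbB, s, hs, hse⟩ := hbf (n % K) hnW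
  set b := bf (n % K) hnW with hbdef
  have hble : b + 1 ≤ n := by
    have h1 : b ≤ (WOF B K S).attach.sup (fun c => bf c.1 c.2) :=
      Finset.le_sup (f := fun c => bf c.1 c.2) (Finset.mem_attach _ ⟨n % K, hnW⟩)
    omega
  refine ⟨n - b, ?_, b, hbB, by omega⟩
  apply Aset_sup
  have hKpos : 0 < K := (SQ_inv B hB hB0 α hα0 hα1 N).hKpos
  have heq : (n - b) + b = n := by omega
  have h1 : ((n - b) + b % K) % K = (s + b % K) % K := by
    rw [Nat.add_mod_mod, heq, hse]
  have h2 : (n - b) ≡ s [MOD K] := Nat.ModEq.add_right_cancel' (b % K) h1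
  have hsK : s < K := Finset.mem_range.mp ((SQ_inv B hB hB0 α hα0 hα1 N).hS hs)
  have h3 : (n - b) % K = s := by
    have := h2
    unfold Nat.ModEq at this
    rw [Nat.mod_eq_of_lt hsK] at this
    exact this
  rw [← hSdef, ← hKdef, h3]
  exact hs

/-- The value of `A`. -/
noncomputable def uval : ℝ :=
  sSup {r : ℝ | ∃ j : ℕ, r =
    (((SQ B hB hB0 α hα0 hα1 j).S.card : ℝ) / (SQ B hB hB0 α hα0 hα1 j).K)}

lemma uval_spec :
    (∀ j : ℕ, ((SQ B hB hB0 α hα0 hα1 j).S.card : ℝ) / (SQ B hB hB0 α hα0 hα1 j).K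
      ≤ uval B hB hB0 α hα0 hα1) ∧
    (∀ ε : ℝ, 0 < ε → ∃ j : ℕ, uval B hB hB0 α hα0 hα1 - ε <
      ((SQ B hB hB0 α hα0 hα1 j).S.card : ℝ) / (SQ B hB hB0 α hα0 hα1 j).K) := by
  have hbdd : BddAbove {r : ℝ | ∃ j : ℕ, r =
      (((SQ B hB hB0 α hα0 hα1 j).S.card : ℝ) / (SQ B hB hB0 α hα0 hα1 j).K)} := by
    refine ⟨1, fun r hr => ?_⟩
    obtain ⟨j, rfl⟩ := hr
    have hKpos : (0 : ℝ) < (SQ B hB hB0 α hα0 hα1 j).K := by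
      exact_mod_cast (SQ_inv B hB hB0 α hα0 hα1 j).hKpos
    rw [div_le_one hKpos]
    have := Finset.card_le_card (SQ_inv B hB hB0 α hα0 hα1 j).hS
    rw [Finset.card_range] at this
    exact_mod_cast this
  have hne : {r : ℝ | ∃ j : ℕ, r =
      (((SQ B hB hB0 α hα0 hα1 j).S.card : ℝ) / (SQ B hB hB0 α hα0 hα1 j).K)}.Nonempty :=
    ⟨_, 0, rfl⟩
  constructor
  · intro j
    exact le_csSup hbdd ⟨j, rfl⟩
  · intro ε hε
    have : uval B hB hB0 α hα0 hα1 - ε < uval B hB hB0 α hα0 hα1 := by linarith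
    obtain ⟨r, ⟨j, rfl⟩, hr⟩ := exists_lt_of_lt_csSup hne this
    exact ⟨j, hr⟩

lemma uval_mono (m n : ℕ) (hmn : m ≤ n) :
    ((SQ B hB hB0 α hα0 hα1 m).S.card : ℝ) / (SQ B hB hB0 α hα0 hα1 m).K ≤
    ((SQ B hB hB0 α hα0 hα1 n).S.card : ℝ) / (SQ B hB hB0 α hα0 hα1 n).K := by
  have h := (SQ_chain B hB hB0 α hα0 hα1 m n hmn).2.2.2.2
  have hKm : (0 : ℝ) < (SQ B hB hB0 α hα0 hα1 m).K := by
    exact_mod_cast (SQ_inv B hB hB0 α hα0 hα1 m).hKpos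
  have hKn : (0 : ℝ) < (SQ B hB hB0 α hα0 hα1 n).K := by
    exact_mod_cast (SQ_inv B hB hB0 α hα0 hα1 n).hKpos
  rw [div_le_div_iff₀ hKm hKn]
  linarith

end Assemble

section Final

variable (B : Set ℕ) (hB : B.Nonempty) (hB0 : buckUpper B = 0)
  (α : ℝ) (hα0 : 0 < α) (hα1 : α < 1)

lemma pow_small : ∀ ε : ℝ, 0 < ε → ∃ N : ℕ, ∀ n : ℕ, N ≤ n → ((1 : ℝ) / 2) ^ n < ε := by
  intro ε hε
  obtain ⟨N, hN⟩ := exists_pow_lt_of_lt_one hε (by norm_num : (1 : ℝ) / 2 < 1)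
  refine ⟨N, fun n hn => lt_of_le_of_lt ?_ hN⟩
  exact pow_le_pow_of_le_one (by norm_num) (by norm_num) hn

lemma stage_facts (N : ℕ) (hN : 1 ≤ N) :
    (0 : ℝ) < (SQ B hB hB0 α hα0 hα1 N).K ∧
    sg B α (SQ B hB hB0 α hα0 hα1 N).K (SQ B hB hB0 α hα0 hα1 N).S
      (SQ B hB hB0 α hα0 hα1 N).T ≤ ((1 : ℝ) / 2) ^ N * (SQ B hB hB0 α hα0 hα1 N).K ∧
    cn B (SQ B hB hB0 α hα0 hα1 N).K (SQ B hB hB0 α hα0 hα1 N).S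
      (SQ B hB hB0 α hα0 hα1 N).T ≤ 8 * (((1 : ℝ) / 2) ^ N * (SQ B hB hB0 α hα0 hα1 N).K) ∧
    ((SQ B hB hB0 α hα0 hα1 N).T.card : ℝ)
      ≤ 40 * (((1 : ℝ) / 2) ^ N * (SQ B hB hB0 α hα0 hα1 N).K) := by
  have hinv := SQ_inv B hB hB0 α hα0 hα1 N
  obtain ⟨N', rfl⟩ := Nat.exists_eq_add_of_le hN
  have hext := SQ_extra B hB hB0 α hα0 hα1 N'
  rw [Nat.add_comm 1 N'] at *
  have hKR : (0 : ℝ) < (SQ B hB hB0 α hα0 hα1 (N' + 1)).K := by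
    exact_mod_cast hinv.hKpos
  have hpow : ((SQ B hB hB0 α hα0 hα1 (N' + 1)).K : ℝ) / 2 ^ (N' + 1)
      = ((1 : ℝ) / 2) ^ (N' + 1) * (SQ B hB hB0 α hα0 hα1 (N' + 1)).K := by
    rw [div_pow, one_pow]
    field_simp
  have h1 := hinv.hsle
  rw [hpow] at h1
  refine ⟨hKR, h1, ?_, ?_⟩
  · exact le_trans hext.hcl (by linarith [hinv.hspos])
  · exact le_trans hext.hTc (by linarith [hinv.hspos])

lemma pinAB_hyp : ∀ ε : ℝ, 0 < ε → ∃ K : ℕ, 0 < K ∧ ∃ Sc Tc : Finset ℕ, ∃ N₀ : ℕ,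
    (∀ n ∈ sumset (Aset B hB hB0 α hα0 hα1) B, n % K ∈ Sc) ∧
    (∀ n : ℕ, n ∉ sumset (Aset B hB hB0 α hα0 hα1) B → N₀ ≤ n → n % K ∈ Tc) ∧
    ((Sc.card : ℝ) ≤ (α + ε) * K) ∧ ((Tc.card : ℝ) ≤ (1 - α + ε) * K) := by
  intro ε hε
  obtain ⟨N₁, hN₁⟩ := pow_small (ε / 8) (by linarith)
  set N := N₁ + 1 with hNdef
  obtain ⟨hKR, hσ, hcl, hTcard⟩ := stage_facts B hB hB0 α hα0 hα1 N (by omega)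
  have hpowN : ((1 : ℝ) / 2) ^ N < ε / 8 := hN₁ N (by omega)
  have hinv := SQ_inv B hB hB0 α hα0 hα1 N
  set st := SQ B hB hB0 α hα0 hα1 N with hstdef
  have hKpos : 0 < st.K := hinv.hKpos
  obtain ⟨N₀, hN₀⟩ := sumset_witness B hB hB0 α hα0 hα1 N
  refine ⟨st.K, hKpos, WOF B st.K st.S ∪ WOF B st.K st.T,
    Finset.range st.K \ WOF B st.K st.S, N₀, ?_, ?_, ?_, ?_⟩
  · exact sumset_cover B hB hB0 α hα0 hα1 N
  · intro n hn hn0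
    rw [Finset.mem_sdiff]
    refine ⟨Finset.mem_range.mpr (Nat.mod_lt _ hKpos), fun h => hn (hN₀ n hn0 h)⟩
  · -- |W ∪ R| = wn + cn = αK + σ ≤ (α + ε)K
    have hcard : ((WOF B st.K st.S ∪ WOF B st.K st.T).card : ℝ)
        ≤ wn B st.K st.S + cn B st.K st.S st.T := by
      have h := Finset.card_sdiff_add_card (WOF B st.K st.T) (WOF B st.K st.S)
      have h' := congrArg (Nat.cast : ℕ → ℝ) h
      push_cast at h'
      unfold wn cn
      rw [Finset.union_comm]
      linarith
    have hsg : wn B st.K st.S + cn B st.K st.S st.T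
        = α * st.K + sg B α st.K st.S st.T := by
      unfold sg
      ring
    calc ((WOF B st.K st.S ∪ WOF B st.K st.T).card : ℝ)
        ≤ α * st.K + sg B α st.K st.S st.T := by rw [← hsg]; exact hcard
      _ ≤ α * st.K + (ε / 8) * st.K := by nlinarith [hσ, hpowN, hKR]
      _ ≤ (α + ε) * st.K := by nlinarith [hKR]
  · -- |range \ W| = K - wn ≤ (1 - α + ε) K
    have hWsub : WOF B st.K st.S ⊆ Finset.range st.K := WOF_subset_range _ _ _ hKpos
    have hcard : ((Finset.range st.K \ WOF B st.K st.S).card : ℝ)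
        = (st.K : ℝ) - wn B st.K st.S := by
      rw [Finset.card_sdiff_of_subset hWsub, Finset.card_range]
      have := Finset.card_le_card hWsub
      rw [Finset.card_range] at this
      unfold wn
      push_cast [Nat.cast_sub this]
      ring
    have hwlow : (α - ε) * st.K ≤ wn B st.K st.S := by
      have hsgdef : wn B st.K st.S = α * st.K + sg B α st.K st.S st.T
          - cn B st.K st.S st.T := by
        unfold sg
        ring
      have h8 : cn B st.K st.S st.T ≤ 8 * ((ε / 8) * st.K) := by
        nlinarith [hcl, hpowN, hKR]
      nlinarith [hinv.hspos, h8, hKR]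
    rw [hcard]
    nlinarith [hwlow, hKR]

lemma pinA_hyp : ∀ ε : ℝ, 0 < ε → ∃ K : ℕ, 0 < K ∧ ∃ Sc Tc : Finset ℕ, ∃ N₀ : ℕ,
    (∀ n ∈ Aset B hB hB0 α hα0 hα1, n % K ∈ Sc) ∧
    (∀ n : ℕ, n ∉ Aset B hB hB0 α hα0 hα1 → N₀ ≤ n → n % K ∈ Tc) ∧
    ((Sc.card : ℝ) ≤ (uval B hB hB0 α hα0 hα1 + ε) * K) ∧
    ((Tc.card : ℝ) ≤ (1 - uval B hB hB0 α hα0 hα1 + ε) * K) := by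
  intro ε hε
  obtain ⟨N₂, hN₂⟩ := pow_small (ε / 40) (by linarith)
  obtain ⟨j₁, hj₁⟩ := (uval_spec B hB hB0 α hα0 hα1).2 ε hε
  set N := max N₂ j₁ + 1 with hNdef
  obtain ⟨hKR, hσ, hcl, hTcard⟩ := stage_facts B hB hB0 α hα0 hα1 N (by omega)
  have hpowN : ((1 : ℝ) / 2) ^ N < ε / 40 := hN₂ N (by omega)
  have hinv := SQ_inv B hB hB0 α hα0 hα1 N
  set st := SQ B hB hB0 α hα0 hα1 N with hstdef
  have hKpos : 0 < st.K := hinv.hKpos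
  have huN : uval B hB hB0 α hα0 hα1 - ε < ((st.S.card : ℝ)) / st.K := by
    calc uval B hB hB0 α hα0 hα1 - ε
        < ((SQ B hB hB0 α hα0 hα1 j₁).S.card : ℝ) / (SQ B hB hB0 α hα0 hα1 j₁).K := hj₁
      _ ≤ ((st.S.card : ℝ)) / st.K := uval_mono B hB hB0 α hα0 hα1 j₁ N (by omega)
  have huNup : ((st.S.card : ℝ)) / st.K ≤ uval B hB hB0 α hα0 hα1 :=
    (uval_spec B hB hB0 α hα0 hα1).1 N
  refine ⟨st.K, hKpos, st.S ∪ st.T, Finset.range st.K \ st.S, 0, ?_, ?_, ?_, ?_⟩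
  · exact Aset_cover B hB hB0 α hα0 hα1 N
  · intro n hn _
    rw [Finset.mem_sdiff]
    refine ⟨Finset.mem_range.mpr (Nat.mod_lt _ hKpos), fun h => hn ?_⟩
    exact Aset_sup B hB hB0 α hα0 hα1 N n h
  · have h1 : ((st.S ∪ st.T).card : ℝ) ≤ (st.S.card : ℝ) + (st.T.card : ℝ) := by
      exact_mod_cast Finset.card_union_le _ _
    have h2 : (st.S.card : ℝ) ≤ uval B hB hB0 α hα0 hα1 * st.K := by
      rw [div_le_iff₀ hKR] at huNup
      linarith
    have h3 : (st.T.card : ℝ) ≤ ε * st.K := by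
      nlinarith [hTcard, hpowN, hKR]
    calc ((st.S ∪ st.T).card : ℝ) ≤ uval B hB hB0 α hα0 hα1 * st.K + ε * st.K := by
          linarith
      _ = (uval B hB hB0 α hα0 hα1 + ε) * st.K := by ring
  · have hSsub : st.S ⊆ Finset.range st.K := hinv.hS
    have hcard : ((Finset.range st.K \ st.S).card : ℝ) = (st.K : ℝ) - st.S.card := by
      rw [Finset.card_sdiff_of_subset hSsub, Finset.card_range]
      have := Finset.card_le_card hSsub
      rw [Finset.card_range] at this
      push_cast [Nat.cast_sub this]
      ring
    rw [hcard]
    rw [lt_div_iff₀ hKR] at huN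
    nlinarith [huN, hKR]

end Final

end Stmt16

theorem stmt16 (B : Set ℕ) (hB : B.Nonempty) (hB0 : buckUpper B = 0)
    (α : ℝ) (hα : α ∈ Set.Icc (0 : ℝ) 1) :
    ∃ A : Set ℕ, ∀ μ : ArithUpperQuasiDensity,
      μ.toFun A = μ.conj A ∧
      μ.toFun (sumset A B) = μ.conj (sumset A B) ∧
      μ.toFun (sumset A B) = α := by
  obtain ⟨hα0, hα1⟩ := hα
  rcases eq_or_lt_of_le hα0 with h0 | h0
  · -- α = 0 : take A = ∅
    refine ⟨∅, fun μ => ?_⟩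
    have hsum : sumset ∅ B = ∅ := by
      ext n
      simp [sumset]
    have he := Stmt16.mu_empty μ
    have hcompl : (∅ : Set ℕ)ᶜ = Set.univ := Set.compl_empty
    refine ⟨?_, ?_, ?_⟩
    · rw [he]
      unfold ArithUpperQuasiDensity.conj
      rw [hcompl, μ.univ_eq]
      ring
    · rw [hsum, he]
      unfold ArithUpperQuasiDensity.conj
      rw [hcompl, μ.univ_eq]
      ring
    · rw [hsum, he, ← h0]
  rcases eq_or_lt_of_le hα1 with h1 | h1
  · -- α = 1 : take A = univ
    refine ⟨Set.univ, fun μ => ?_⟩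
    obtain ⟨b₀, hb₀⟩ := hB
    have hpin := Stmt16.pin (sumset Set.univ B) 1 ?_ μ
    · refine ⟨?_, ?_, ?_⟩
      · rw [μ.univ_eq]
        unfold ArithUpperQuasiDensity.conj
        rw [Set.compl_univ, Stmt16.mu_empty μ]
        ring
      · rw [hpin.1]
        unfold ArithUpperQuasiDensity.conj
        rw [hpin.2]
        ring
      · rw [hpin.1, h1]
    · intro ε hε
      refine ⟨1, one_pos, {0}, ∅, b₀, ?_, ?_, ?_, ?_⟩
      · intro n _
        simp [Nat.mod_one]
      · intro n hn hbn
        exfalso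
        apply hn
        exact ⟨n - b₀, Set.mem_univ _, b₀, hb₀, by omega⟩
      · simp
        linarith
      · simp
        linarith
  · -- main case 0 < α < 1
    refine ⟨Stmt16.Aset B hB hB0 α h0 h1, fun μ => ?_⟩
    have hA := Stmt16.pin _ (Stmt16.uval B hB hB0 α h0 h1)
      (Stmt16.pinA_hyp B hB hB0 α h0 h1) μ
    have hAB := Stmt16.pin _ α (Stmt16.pinAB_hyp B hB hB0 α h0 h1) μ
    refine ⟨?_, ?_, hAB.1⟩
    · rw [hA.1]
      unfold ArithUpperQuasiDensity.conj
      rw [hA.2]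
      ring
    · rw [hAB.1]
      unfold ArithUpperQuasiDensity.conj
      rw [hAB.2]
      ring
end

section
/- Every arithmetic upper quasi-density μ* assigns μ*(X) = 0 to every set X ⊆ ℕ with upper Buck density zero; in particular, μ*(P) = 0 for the set P of primes. -/
open Filter Set

section Helpers

variable (μ : ArithUpperQuasiDensity)

lemma mu_nonneg (X : Set ℕ) : 0 ≤ μ.toFun X := by
  have h := μ.subadd X Xᶜ
  rw [Set.union_compl_self, μ.univ_eq] at h
  have h2 := μ.le_one Xᶜ
  linarith

lemma mu_zero_eq : μ.toFun {0} = 0 := by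
  have h := μ.scale {0} 2 0 (by norm_num)
  simp only [Set.image_singleton, Nat.mul_zero, Nat.add_zero] at h
  linarith

lemma mu_singleton (a : ℕ) : μ.toFun {a} = 0 := by
  have h := μ.scale {0} 1 a le_rfl
  simp only [Set.image_singleton, Nat.one_mul, Nat.zero_add, Nat.mul_zero] at h
  rw [h, mu_zero_eq]
  simp

lemma mu_empty : μ.toFun ∅ = 0 := by
  have h := μ.scale ∅ 2 0 (by norm_num)
  rw [Set.image_empty] at h
  linarith

lemma mu_finite (F : Set ℕ) (hF : F.Finite) : μ.toFun F = 0 := by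
  refine le_antisymm ?_ (mu_nonneg μ F)
  refine Set.Finite.induction_on (motive := fun s _ => μ.toFun s ≤ 0) F hF (by rw [mu_empty]) ?_
  intro a s _ _ ih
  have h := μ.subadd {a} s
  rw [Set.singleton_union] at h
  calc μ.toFun (insert a s) ≤ μ.toFun {a} + μ.toFun s := h
  _ ≤ 0 := by rw [mu_singleton]; linarith

lemma mu_biUnion_le (R : Finset ℕ) (f : ℕ → Set ℕ) :
    μ.toFun (⋃ c ∈ R, f c) ≤ ∑ c ∈ R, μ.toFun (f c) := by
  classical
  induction R using Finset.induction_on with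
  | empty => simp [mu_empty]
  | insert _ _ ha ih =>
    rename_i a s
    rw [Finset.set_biUnion_insert, Finset.sum_insert ha]
    calc μ.toFun _ ≤ μ.toFun (f a) + μ.toFun (⋃ c ∈ s, f c) := μ.subadd _ _
    _ ≤ _ := by linarith

lemma mu_AP_le (k h : ℕ) (hk : 1 ≤ k) (X : Set ℕ)
    (hX : X ⊆ {n : ℕ | ∃ m : ℕ, n = k * m + h}) : μ.toFun X ≤ 1 / k := by
  have hXeq : X = (fun x => k * x + h) '' {m : ℕ | k * m + h ∈ X} := by
    ext n
    constructor
    · intro hn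
      obtain ⟨m, rfl⟩ := hX hn
      exact ⟨m, hn, rfl⟩
    · rintro ⟨m, hm, rfl⟩
      exact hm
  rw [hXeq, μ.scale _ k h hk]
  have h1 := μ.le_one {m : ℕ | k * m + h ∈ X}
  have hk' : (0:ℝ) < k := by exact_mod_cast hk
  gcongr

lemma mu_cover_le (L : ℕ) (hL : 1 ≤ L) (R : Finset ℕ) (X : Set ℕ)
    (hX : X ⊆ ⋃ c ∈ R, {n : ℕ | ∃ m : ℕ, n = L * m + c}) :
    μ.toFun X ≤ R.card / L := by
  have hXeq : X = ⋃ c ∈ R, (X ∩ {n : ℕ | ∃ m : ℕ, n = L * m + c}) := by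
    ext n
    constructor
    · intro hn
      obtain ⟨P, ⟨c, rfl⟩, hP⟩ := hX hn
      simp only [Set.mem_iUnion] at hP ⊢
      obtain ⟨hc, hn'⟩ := hP
      exact ⟨c, hc, hn, hn'⟩
    · simp only [Set.mem_iUnion]
      rintro ⟨c, hc, hn, -⟩
      exact hn
  calc μ.toFun X ≤ ∑ c ∈ R, μ.toFun (X ∩ {n : ℕ | ∃ m : ℕ, n = L * m + c}) := by
        conv_lhs => rw [hXeq]
        exact mu_biUnion_le μ R _
  _ ≤ ∑ c ∈ R, (1 / L : ℝ) := by
        refine Finset.sum_le_sum fun c _ => ?_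
        exact mu_AP_le μ L c hL _ Set.inter_subset_right
  _ = R.card / L := by rw [Finset.sum_const, nsmul_eq_mul]; ring

lemma card_filter_mod (L : ℕ) (hL : 0 < L) (R : Finset ℕ) (hR : ∀ c ∈ R, c < L) (m : ℕ) :
    ((Finset.range (m * L)).filter (fun j => j % L ∈ R)).card = m * R.card := by
  classical
  have key : ((Finset.range (m * L)).filter (fun j => j % L ∈ R)).card
      = (Finset.range m ×ˢ R).card := by
    refine Finset.card_bij' (fun j _ => (j / L, j % L)) (fun p _ => p.1 * L + p.2) ?_ ?_ ?_ ?_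
    · intro j hj
      rw [Finset.mem_filter, Finset.mem_range] at hj
      rw [Finset.mem_product, Finset.mem_range]
      exact ⟨(Nat.div_lt_iff_lt_mul hL).2 hj.1, hj.2⟩
    · intro p hp
      rw [Finset.mem_product, Finset.mem_range] at hp
      rw [Finset.mem_filter, Finset.mem_range]
      have hc : p.2 < L := hR _ hp.2
      constructor
      · calc p.1 * L + p.2 < p.1 * L + L := by omega
        _ = (p.1 + 1) * L := by ring
        _ ≤ m * L := Nat.mul_le_mul_right L hp.1
      · show (p.1 * L + p.2) % L ∈ R
        rw [Nat.mul_add_mod', Nat.mod_eq_of_lt hc]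
        exact hp.2
    · intro j hj
      exact Nat.div_add_mod' j L
    · intro p hp
      rw [Finset.mem_product, Finset.mem_range] at hp
      have hc : p.2 < L := hR _ hp.2
      show ((p.1 * L + p.2) / L, (p.1 * L + p.2) % L) = p
      have h1 : (p.1 * L + p.2) % L = p.2 := by rw [Nat.mul_add_mod', Nat.mod_eq_of_lt hc]
      have h2 : (p.1 * L + p.2) / L = p.1 := by
        rw [Nat.mul_comm p.1 L, Nat.mul_add_div hL, Nat.div_eq_of_lt hc, Nat.add_zero]
      rw [h1, h2]
  rw [key, Finset.card_product, Finset.card_range]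

lemma density_f_le_one (A : Set ℕ) (n : ℕ) : ((A ∩ Set.Icc 1 n).ncard : ℝ) / n ≤ 1 := by
  rcases Nat.eq_zero_or_pos n with rfl | hn
  · simp
  · have h1 : (A ∩ Set.Icc 1 n).ncard ≤ (Set.Icc 1 n).ncard :=
      Set.ncard_le_ncard Set.inter_subset_right (Set.finite_Icc 1 n)
    have h2 : (Set.Icc 1 n).ncard = n := by
      rw [Set.ncard_eq_toFinset_card', Set.toFinset_Icc, Nat.card_Icc]
      omega
    rw [div_le_one (by exact_mod_cast hn)]
    exact_mod_cast h2 ▸ h1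

lemma le_upperDensity_AP (S : Finset (ℕ × ℕ)) (hS : ∀ p ∈ S, 1 ≤ p.1) :
    ((((Finset.range (∏ p ∈ S, p.1)).filter
        (fun c => ∃ p ∈ S, c % p.1 = p.2 % p.1)).card : ℝ)) / (∏ p ∈ S, p.1)
      ≤ upperDensity (⋃ p ∈ S, {n : ℕ | ∃ m : ℕ, n = p.1 * m + p.2}) := by
  classical
  set L := ∏ p ∈ S, p.1 with hLdef
  have hL : 0 < L := Finset.prod_pos fun p hp => hS p hp
  set R := (Finset.range L).filter (fun c => ∃ p ∈ S, c % p.1 = p.2 % p.1) with hRdef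
  set A := ⋃ p ∈ S, {n : ℕ | ∃ m : ℕ, n = p.1 * m + p.2} with hAdef
  set N := S.sup Prod.snd with hNdef
  have hRlt : ∀ c ∈ R, c < L := fun c hc => Finset.mem_range.1 (Finset.mem_filter.1 hc).1
  have key : ∀ n : ℕ, N < n → n % L ∈ R → n ∈ A := by
    intro n hNn hnR
    rw [hRdef, Finset.mem_filter] at hnR
    obtain ⟨-, p, hpS, hp⟩ := hnR
    have hdvd : p.1 ∣ L := Finset.dvd_prod_of_mem _ hpS
    rw [Nat.mod_mod_of_dvd n hdvd] at hp
    have hle : p.2 ≤ n := le_trans (Finset.le_sup hpS) hNn.le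
    have hmod : p.1 ∣ n - p.2 := (Nat.modEq_iff_dvd' hle).1 hp.symm
    obtain ⟨m, hm⟩ := hmod
    refine Set.mem_biUnion hpS ⟨m, ?_⟩
    omega
  have main : ∀ m : ℕ, 0 < m →
      ((m : ℝ) * R.card - (N + 1)) / ((m : ℝ) * L)
        ≤ ((A ∩ Set.Icc 1 (m * L)).ncard : ℝ) / ((m * L : ℕ) : ℝ) := by
    intro m hm
    set G := (Finset.range (m * L)).filter (fun j => j % L ∈ R) with hGdef
    set F := G.filter (fun j => N < j) with hFdef
    have hGcard : G.card = m * R.card := card_filter_mod L hL R hRlt m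
    have hFcard : m * R.card ≤ F.card + (N + 1) := by
      have hsplit : F.card + (G.filter (fun j => ¬ N < j)).card = G.card :=
        Finset.card_filter_add_card_filter_not (p := fun j => N < j)
      have hsub : G.filter (fun j => ¬ N < j) ⊆ Finset.range (N + 1) := by
        intro j hj
        rw [Finset.mem_filter] at hj
        rw [Finset.mem_range]
        omega
      have hle := Finset.card_le_card hsub
      rw [Finset.card_range] at hle
      omega
    have hFsub : (↑F : Set ℕ) ⊆ A ∩ Set.Icc 1 (m * L) := by
      intro j hj
      simp only [Finset.coe_filter, Set.mem_setOf_eq, hFdef, hGdef, Finset.mem_filter,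
        Finset.mem_range] at hj
      obtain ⟨⟨hjlt, hjR⟩, hjN⟩ := hj
      exact ⟨key j hjN hjR, by omega, by omega⟩
    have hfin : (A ∩ Set.Icc 1 (m * L)).Finite :=
      (Set.finite_Icc 1 (m * L)).subset Set.inter_subset_right
    have hncard : F.card ≤ (A ∩ Set.Icc 1 (m * L)).ncard := by
      have := Set.ncard_le_ncard hFsub hfin
      rwa [Set.ncard_coe_finset] at this
    have hcast : ((m * L : ℕ) : ℝ) = (m : ℝ) * L := by push_cast; ring
    rw [hcast]
    have hML : (0:ℝ) < (m : ℝ) * L := by positivity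
    apply div_le_div_of_nonneg_right ?_ hML.le
    have h1 : ((F.card : ℝ)) ≤ ((A ∩ Set.Icc 1 (m * L)).ncard : ℝ) := by exact_mod_cast hncard
    have h2 : ((m : ℝ) * R.card) ≤ (F.card : ℝ) + (N + 1) := by exact_mod_cast hFcard
    linarith
  have hbdd : Filter.IsBoundedUnder (· ≤ ·) Filter.atTop
      (fun n : ℕ => ((A ∩ Set.Icc 1 n).ncard : ℝ) / n) :=
    ⟨1, Filter.eventually_map.2 (Filter.Eventually.of_forall fun n => density_f_le_one A n)⟩
  have step : ∀ ε : ℝ, 0 < ε → (R.card : ℝ) / L - ε ≤ upperDensity A := by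
    intro ε hε
    apply Filter.le_limsup_of_frequently_le ?_ hbdd
    rw [Filter.frequently_atTop]
    intro b
    set M := max b (⌈((N : ℝ) + 1) / ε⌉₊ + 1) with hM
    have hM1 : 0 < M := lt_of_lt_of_le (Nat.succ_pos _) (le_max_right _ _)
    refine ⟨M * L, ?_, ?_⟩
    · calc b ≤ M := le_max_left _ _
      _ ≤ M * L := Nat.le_mul_of_pos_right M hL
    · refine le_trans ?_ (main M hM1)
      have hML : (0:ℝ) < (M : ℝ) * L := by positivity
      have heq : ((M : ℝ) * R.card - (N + 1)) / ((M : ℝ) * L)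
          = (R.card : ℝ) / L - ((N : ℝ) + 1) / ((M : ℝ) * L) := by
        field_simp
      rw [heq]
      have hMlarge : ((N : ℝ) + 1) / ε ≤ M := by
        calc ((N : ℝ) + 1) / ε ≤ (⌈((N : ℝ) + 1) / ε⌉₊ : ℝ) := Nat.le_ceil _
        _ ≤ M := by
            have h := le_max_right b (⌈((N : ℝ) + 1) / ε⌉₊ + 1)
            have : (⌈((N : ℝ) + 1) / ε⌉₊ : ℕ) ≤ M := by omega
            exact_mod_cast this
      have hMε : ((N : ℝ) + 1) / ((M : ℝ) * L) ≤ ε := by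
        rw [div_le_iff₀ hML]
        have h1 : ((N : ℝ) + 1) ≤ ε * M := by
          rw [div_le_iff₀ hε] at hMlarge
          linarith
        have hLge : (1 : ℝ) ≤ (L : ℝ) := by exact_mod_cast hL
        have hMpos : (0:ℝ) ≤ (M:ℝ) := Nat.cast_nonneg M
        nlinarith
      linarith
  have hfinal : ∀ ε : ℝ, 0 < ε → (R.card : ℝ) / L ≤ upperDensity A + ε := by
    intro ε hε
    linarith [step ε hε]
  exact le_of_forall_pos_le_add hfinal

lemma totient_prod_primes (P : Finset ℕ) (hP : ∀ p ∈ P, p.Prime) :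
    (∏ p ∈ P, p).totient = ∏ p ∈ P, (p - 1) := by
  classical
  induction P using Finset.induction_on with
  | empty => simp
  | insert _ _ ha ih =>
    rename_i a s
    rw [Finset.prod_insert ha, Finset.prod_insert ha]
    have haP : a.Prime := hP a (Finset.mem_insert_self a s)
    have hcop : Nat.Coprime a (∏ p ∈ s, p) := by
      apply Nat.Coprime.prod_right
      intro p hp
      exact (Nat.coprime_primes haP (hP p (Finset.mem_insert_of_mem hp))).2
        (fun h => ha (h ▸ hp))
    rw [Nat.totient_mul hcop, Nat.totient_prime haP,
      ih (fun p hp => hP p (Finset.mem_insert_of_mem hp))]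

lemma exists_prime_finset (ε : ℝ) (hε : 0 < ε) :
    ∃ P : Finset ℕ, (∀ p ∈ P, p.Prime) ∧
      ((∏ p ∈ P, p : ℕ).totient : ℝ) / ((∏ p ∈ P, p : ℕ) : ℝ) < ε := by
  classical
  have hnonneg : ∀ n : ℕ, 0 ≤ Set.indicator {p | p.Prime} (fun n : ℕ => (1:ℝ)/n) n := by
    intro n
    apply Set.indicator_nonneg
    intro i _
    positivity
  have htend := (not_summable_iff_tendsto_nat_atTop_of_nonneg hnonneg).1
    not_summable_one_div_on_primes
  obtain ⟨n, hn⟩ := (htend.eventually_ge_atTop (-Real.log ε + 1)).exists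
  refine ⟨(Finset.range n).filter Nat.Prime, fun p hp => (Finset.mem_filter.1 hp).2, ?_⟩
  set P := (Finset.range n).filter Nat.Prime with hP
  have hprime : ∀ p ∈ P, p.Prime := fun p hp => (Finset.mem_filter.1 hp).2
  have hpos : ∀ p ∈ P, (0:ℝ) < p := fun p hp => by
    exact_mod_cast (hprime p hp).pos
  have hsum : ∑ i ∈ Finset.range n, Set.indicator {p | p.Prime} (fun n : ℕ => (1:ℝ)/n) i
      = ∑ p ∈ P, (1:ℝ)/p := by
    rw [Finset.sum_indicator_eq_sum_filter]
    congr 1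
  have hk : (0:ℕ) < ∏ p ∈ P, p := Finset.prod_pos fun p hp => (hprime p hp).pos
  have hcast : ((∏ p ∈ P, p : ℕ).totient : ℝ) / ((∏ p ∈ P, p : ℕ) : ℝ)
      = ∏ p ∈ P, (((p:ℝ) - 1) / p) := by
    rw [totient_prod_primes P hprime, Finset.prod_div_distrib, Nat.cast_prod, Nat.cast_prod]
    congr 1
    apply Finset.prod_congr rfl
    intro p hp
    have h1 : 1 ≤ p := (hprime p hp).one_lt.le
    rw [Nat.cast_sub h1, Nat.cast_one]
  rw [hcast]
  have hstep : ∏ p ∈ P, (((p:ℝ) - 1) / p) ≤ ∏ p ∈ P, Real.exp (-(1/(p:ℝ))) := by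
    apply Finset.prod_le_prod
    · intro p hp
      have := hpos p hp
      have h1 : (1:ℝ) ≤ p := by exact_mod_cast (hprime p hp).one_lt.le
      apply div_nonneg <;> linarith
    · intro p hp
      have hp0 := hpos p hp
      have heq : ((p:ℝ) - 1) / p = 1 - 1/p := by field_simp
      rw [heq]
      have := Real.add_one_le_exp (-(1/(p:ℝ)))
      linarith
  have hexp : ∏ p ∈ P, Real.exp (-(1/(p:ℝ))) = Real.exp (-(∑ p ∈ P, (1:ℝ)/p)) := by
    rw [← Real.exp_sum]
    congr 1
    rw [← Finset.sum_neg_distrib]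
  have hfin : Real.exp (-(∑ p ∈ P, (1:ℝ)/p)) < ε := by
    rw [← Real.exp_log hε]
    apply Real.exp_lt_exp.2
    rw [hsum] at hn
    linarith
  linarith

end Helpers

theorem stmt19 :
    (∀ (μ : ArithUpperQuasiDensity) (X : Set ℕ), buckUpper X = 0 → μ.toFun X = 0) ∧
    (∀ μ : ArithUpperQuasiDensity, μ.toFun {p : ℕ | p.Prime} = 0) := by
  classical
  have part1 : ∀ (μ : ArithUpperQuasiDensity) (X : Set ℕ), buckUpper X = 0 → μ.toFun X = 0 := by
    intro μ X hX
    refine le_antisymm ?_ (mu_nonneg μ X)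
    by_contra hpos
    push_neg at hpos
    -- the defining set of buckUpper is nonempty
    have hne : {d : ℝ | ∃ A : Set ℕ, IsAPUnion A ∧ X ⊆ A ∧ d = upperDensity A}.Nonempty := by
      refine ⟨upperDensity Set.univ, Set.univ, ⟨{(1, 0)}, ?_, ?_⟩, Set.subset_univ X, rfl⟩
      · intro p hp
        rw [Finset.mem_singleton] at hp
        subst hp
        exact le_rfl
      · ext n
        constructor
        · intro _
          exact Set.mem_biUnion (Finset.mem_singleton_self ((1, 0) : ℕ × ℕ)) ⟨n, by ring⟩
        · intro _
          trivial
    have hlt : sInf {d : ℝ | ∃ A : Set ℕ, IsAPUnion A ∧ X ⊆ A ∧ d = upperDensity A}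
        < μ.toFun X := by
      rw [← buckUpper, hX]; exact hpos
    obtain ⟨d, ⟨A, ⟨S, hS1, hAeq⟩, hXA, rfl⟩, hdlt⟩ := exists_lt_of_csInf_lt hne hlt
    set L := ∏ p ∈ S, p.1 with hLdef
    have hL : 0 < L := Finset.prod_pos fun p hp => hS1 p hp
    set R := (Finset.range L).filter (fun c => ∃ p ∈ S, c % p.1 = p.2 % p.1) with hRdef
    -- X is covered by the progressions L·ℕ + c, c ∈ R
    have hcover : X ⊆ ⋃ c ∈ R, {n : ℕ | ∃ m : ℕ, n = L * m + c} := by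
      intro n hn
      have hnA := hXA hn
      rw [hAeq] at hnA
      obtain ⟨U, ⟨p, rfl⟩, hU⟩ := hnA
      simp only [Set.mem_iUnion] at hU
      obtain ⟨hpS, m, hm⟩ := hU
      have hdvd : p.1 ∣ L := Finset.dvd_prod_of_mem _ hpS
      have hcR : n % L ∈ R := by
        rw [hRdef, Finset.mem_filter, Finset.mem_range]
        refine ⟨Nat.mod_lt n hL, p, hpS, ?_⟩
        rw [Nat.mod_mod_of_dvd n hdvd, hm, Nat.mul_add_mod]
      refine Set.mem_biUnion hcR ⟨n / L, ?_⟩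
      rw [Nat.mul_comm, Nat.div_add_mod']
    have h1 : μ.toFun X ≤ (R.card : ℝ) / L := mu_cover_le μ L hL R X hcover
    have h2 : (R.card : ℝ) / L ≤ upperDensity A := by
      rw [hAeq]
      exact le_upperDensity_AP S hS1
    linarith
  refine ⟨part1, ?_⟩
  intro μ
  refine le_antisymm ?_ (mu_nonneg μ _)
  by_contra hpos
  push_neg at hpos
  obtain ⟨P, hPprime, hPsmall⟩ := exists_prime_finset (μ.toFun {p : ℕ | p.Prime}) hpos
  set k := ∏ p ∈ P, p with hk
  have hk0 : 0 < k := Finset.prod_pos fun p hp => (hPprime p hp).pos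
  set R := (Finset.range k).filter k.Coprime with hR
  have hRcard : R.card = k.totient := (Nat.totient_eq_card_coprime k).symm
  -- primes split into P and numbers coprime to k
  have hsplit : {p : ℕ | p.Prime} ⊆ (↑P : Set ℕ) ∪ {n : ℕ | k.Coprime n} := by
    intro q hq
    by_cases hqP : q ∈ P
    · exact Or.inl hqP
    · right
      apply Nat.Coprime.prod_left
      intro p hp
      exact (Nat.coprime_primes (hPprime p hp) hq).2 (fun h => hqP (h ▸ hp))
  have hunion : {p : ℕ | p.Prime}
      = ({p : ℕ | p.Prime} ∩ (↑P : Set ℕ)) ∪ ({p : ℕ | p.Prime} ∩ {n : ℕ | k.Coprime n}) := by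
    rw [← Set.inter_union_distrib_left]
    exact (Set.inter_eq_left.2 hsplit).symm
  have hP0 : μ.toFun ({p : ℕ | p.Prime} ∩ (↑P : Set ℕ)) = 0 :=
    mu_finite μ _ (P.finite_toSet.subset Set.inter_subset_right)
  have hcop : μ.toFun ({p : ℕ | p.Prime} ∩ {n : ℕ | k.Coprime n}) ≤ (R.card : ℝ) / k := by
    apply mu_cover_le μ k hk0 R
    intro n hn
    have hcopn : k.Coprime n := hn.2
    have hcR : n % k ∈ R := by
      rw [hR, Finset.mem_filter, Finset.mem_range]
      refine ⟨Nat.mod_lt n hk0, ?_⟩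
      have : Nat.gcd k (n % k) = Nat.gcd k n := by
        conv_rhs => rw [Nat.gcd_rec]
        exact Nat.gcd_comm _ _
      unfold Nat.Coprime at hcopn ⊢
      rw [this, hcopn]
    refine Set.mem_biUnion hcR ⟨n / k, ?_⟩
    rw [Nat.mul_comm, Nat.div_add_mod']
  have hfinal := μ.subadd ({p : ℕ | p.Prime} ∩ (↑P : Set ℕ))
    ({p : ℕ | p.Prime} ∩ {n : ℕ | k.Coprime n})
  rw [← hunion] at hfinal
  rw [hRcard] at hcop
  linarith
end
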